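/- arXiv:1002.4510 — 7 statements merged into one kernel-verified Lean document; each statement's English description precedes it below -/
import Mathlib

section
/- Every completely transitive linear code is completely regular. That is, if C is a linear code over 𝔽_q with covering radius ρ such that the action of Aut(C) on the cosets of C has exactly ρ+1 orbits, then C is completely regular. -/
open Finset

variable {F : Type*} [Field F] [Fintype F] [DecidableEq F]

/-- The Hamming distance from a vector to a code. -/
noncomputable def distToCode {ι : Type*} [Fintype ι] (C : Set (ι → F)) (x : ι → F) : ℕ :=
  sInf {d : ℕ | ∃ c ∈ C, hammingDist x c = d}

/-- The covering radius of a code: the maximal distance of a vector to the code. -/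
noncomputable def coveringRadius {ι : Type*} [Fintype ι] (C : Set (ι → F)) : ℕ :=
  sSup {d : ℕ | ∃ x : ι → F, distToCode C x = d}

/-- `C` has intersection numbers `b l` (number of neighbours one step further from the code)
and `c l` (number of neighbours one step closer to the code), for every `x` at distance `l`. -/
def HasIntersectionNumbers {ι : Type*} [Fintype ι] (C : Set (ι → F)) (b c : ℕ → ℕ) : Prop :=
  ∀ l : ℕ, ∀ x : ι → F, distToCode C x = l →
    Nat.card {y : ι → F | hammingDist x y = 1 ∧ distToCode C y = l + 1} = b l ∧
    Nat.card {y : ι → F | hammingDist x y = 1 ∧ distToCode C y + 1 = l} = c l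

/-- A code is completely regular if it admits intersection numbers. -/
def IsCompletelyRegular {ι : Type*} [Fintype ι] (C : Set (ι → F)) : Prop :=
  ∃ b c : ℕ → ℕ, HasIntersectionNumbers C b c

/-- The minimum distance of a code. -/
noncomputable def minDist {ι : Type*} [Fintype ι] (C : Set (ι → F)) : ℕ :=
  sInf {d : ℕ | ∃ x ∈ C, ∃ y ∈ C, x ≠ y ∧ hammingDist x y = d}

/-- A code is equidistant if any two distinct codewords are at the same Hamming distance. -/
def IsEquidistant {ι : Type*} [Fintype ι] (C : Set (ι → F)) : Prop :=
  ∃ d : ℕ, ∀ x ∈ C, ∀ y ∈ C, x ≠ y → hammingDist x y = d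

/-- The dual of a code, with respect to the standard bilinear form. -/
def dualSet {ι : Type*} [Fintype ι] (C : Set (ι → F)) : Set (ι → F) :=
  {y | ∀ x ∈ C, ∑ i, x i * y i = 0}

/-- A code of length `n` is antipodal if it contains a word of Hamming weight `n`. -/
def IsAntipodal {ι : Type*} [Fintype ι] (C : Set (ι → F)) : Prop :=
  ∃ v ∈ C, hammingNorm v = Fintype.card ι

/-- A monomial transformation: a coordinate permutation composed with multiplication of
each coordinate by a nonzero scalar. -/
def IsMonomialMap {ι : Type*} (φ : (ι → F) → (ι → F)) : Prop :=
  ∃ (π : Equiv.Perm ι) (s : ι → Fˣ), ∀ x i, φ x i = (s i : F) * x (π i)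

/-- Two codes are monomially equivalent if one is the image of the other under a bijection of
coordinates together with multiplication of each coordinate by a nonzero scalar. -/
def MonomiallyEquivalent {ι κ : Type*} (C : Set (ι → F)) (D : Set (κ → F)) : Prop :=
  ∃ (e : ι ≃ κ) (s : ι → Fˣ),
    (fun (x : ι → F) (j : κ) => (s (e.symm j) : F) * x (e.symm j)) '' C = D

/-- The orbit, under the action of `Aut C` on the cosets of `C`, of the coset of `v`
(realised as the union of all cosets in the orbit). -/
def cosetOrbit {ι : Type*} (C : Submodule F (ι → F)) (v : ι → F) : Set (ι → F) :=
  {w | ∃ φ : (ι → F) → (ι → F), IsMonomialMap φ ∧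
    φ '' (C : Set (ι → F)) = (C : Set (ι → F)) ∧ φ v - w ∈ C}

/-- The number of orbits of the action of `Aut C` on the cosets of `C`. -/
noncomputable def numCosetOrbits {ι : Type*} (C : Submodule F (ι → F)) : ℕ :=
  Nat.card (Set.range (cosetOrbit C))

/-- `H` is a `q`-ary Hamming code with parameter `m ≥ 2`: a perfect
`[(q^m-1)/(q-1), (q^m-1)/(q-1) - m, 3]_q` code with covering radius 1. -/
def IsHammingCode (m : ℕ) {nm : ℕ} (H : Submodule F (Fin nm → F)) : Prop :=
  2 ≤ m ∧ nm = (Fintype.card F ^ m - 1) / (Fintype.card F - 1) ∧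
  Module.finrank F H = nm - m ∧ minDist (H : Set (Fin nm → F)) = 3 ∧
  coveringRadius (H : Set (Fin nm → F)) = 1

/-- The extended code: append an overall parity-check coordinate. -/
def extendedCode {m : ℕ} (D : Set (Fin m → F)) : Set (Fin (m + 1) → F) :=
  {z | (fun i : Fin m => z i.castSucc) ∈ D ∧ ∑ i, z i = 0}

/-- Construction I(u): append `u` free coordinates to every codeword. -/
def appendCode (u : ℕ) {n : ℕ} (C : Set (Fin n → F)) : Set (Fin (n + u) → F) :=
  {z | ∃ c ∈ C, ∃ y : Fin u → F, z = Fin.append c y}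

/-- Construction II(ℓ): codewords are `ℓ`-tuples of blocks whose `λ`-weighted sum lies in `C`. -/
def repeatCode {n ℓ : ℕ} (lam : Fin ℓ → Fˣ) (C : Set (Fin n → F)) :
    Set (Fin ℓ × Fin n → F) :=
  {z | (fun j : Fin n => ∑ i : Fin ℓ, (lam i : F) * z (i, j)) ∈ C}

/-- The code `{(x₁|⋯|x_ℓ|y) : x₁+⋯+x_ℓ ∈ H, y free}` built from a code `H`. -/
def hammingRepeatCode {nm : ℕ} (ℓ u : ℕ) (H : Set (Fin nm → F)) :
    Set ((Fin ℓ × Fin nm) ⊕ Fin u → F) :=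
  {z | (fun j : Fin nm => ∑ i : Fin ℓ, z (Sum.inl (i, j))) ∈ H}

set_option linter.unusedSectionVars false

namespace CTaux

variable {n : ℕ}

lemma distSet_nonempty (C : Submodule F (Fin n → F)) (x : Fin n → F) :
    {d : ℕ | ∃ c ∈ (C : Set (Fin n → F)), hammingDist x c = d}.Nonempty :=
  ⟨hammingDist x 0, 0, C.zero_mem, rfl⟩

lemma exists_nearest (C : Submodule F (Fin n → F)) (x : Fin n → F) :
    ∃ c ∈ (C : Set (Fin n → F)), hammingDist x c = distToCode (C : Set (Fin n → F)) x :=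
  Nat.sInf_mem (distSet_nonempty C x)

lemma distToCode_le (C : Submodule F (Fin n → F)) (x : Fin n → F) {c : Fin n → F} (hc : c ∈ C) :
    distToCode (C : Set (Fin n → F)) x ≤ hammingDist x c :=
  Nat.sInf_le ⟨c, hc, rfl⟩

lemma distToCode_triangle (C : Submodule F (Fin n → F)) (x y : Fin n → F) :
    distToCode (C : Set (Fin n → F)) x ≤ hammingDist x y + distToCode (C : Set (Fin n → F)) y := by
  obtain ⟨c, hc, hd⟩ := exists_nearest C y
  calc distToCode (C : Set (Fin n → F)) x ≤ hammingDist x c := distToCode_le C x hc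
  _ ≤ hammingDist x y + hammingDist y c := hammingDist_triangle _ _ _
  _ = _ := by rw [hd]

lemma hammingDist_perm (π : Equiv.Perm (Fin n)) (x y : Fin n → F) :
    hammingDist (fun i => x (π i)) (fun i => y (π i)) = hammingDist x y := by
  unfold hammingDist
  refine Finset.card_bij (fun i _ => π i) ?_ ?_ ?_
  · intro a ha
    simp only [Finset.mem_filter, Finset.mem_univ, true_and] at ha ⊢
    exact ha
  · intro a _ b _ hab; exact π.injective hab
  · intro b hb
    refine ⟨π.symm b, ?_, by simp⟩
    simp only [Finset.mem_filter, Finset.mem_univ, true_and, Equiv.apply_symm_apply] at hb ⊢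
    exact hb

lemma hammingDist_monomial {φ : (Fin n → F) → (Fin n → F)} (hφ : IsMonomialMap φ)
    (x y : Fin n → F) : hammingDist (φ x) (φ y) = hammingDist x y := by
  obtain ⟨π, s, hs⟩ := hφ
  have hx : φ x = fun i => (s i : F) * (fun j => x (π j)) i := funext (hs x)
  have hy : φ y = fun i => (s i : F) * (fun j => y (π j)) i := funext (hs y)
  rw [hx, hy]
  rw [hammingDist_comp (fun i (a : F) => (s i : F) * a)
    (fun i a b hab => mul_left_cancel₀ (Units.ne_zero (s i)) hab)]
  exact hammingDist_perm π x y

lemma hammingDist_sub_const (a b c : Fin n → F) :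
    hammingDist (a - c) (b - c) = hammingDist a b := by
  rw [hammingDist_eq_hammingNorm, hammingDist_eq_hammingNorm]
  congr 1
  abel

lemma monomial_inverse {φ : (Fin n → F) → (Fin n → F)} (hφ : IsMonomialMap φ) :
    ∃ ψ : (Fin n → F) → (Fin n → F), IsMonomialMap ψ ∧
      (∀ x, ψ (φ x) = x) ∧ (∀ x, φ (ψ x) = x) := by
  obtain ⟨π, s, hs⟩ := hφ
  refine ⟨fun x i => (((s (π.symm i))⁻¹ : Fˣ) : F) * x (π.symm i),
    ⟨π.symm, fun i => (s (π.symm i))⁻¹, fun x i => rfl⟩, ?_, ?_⟩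
  · intro x; funext i; simp [hs]
  · intro x; funext i; rw [hs]; simp

lemma monomial_sub {φ : (Fin n → F) → (Fin n → F)} (hφ : IsMonomialMap φ)
    (x y : Fin n → F) : φ (x - y) = φ x - φ y := by
  obtain ⟨π, s, hs⟩ := hφ
  funext i
  simp [hs, mul_sub]

lemma monomial_injective {φ : (Fin n → F) → (Fin n → F)} (hφ : IsMonomialMap φ) :
    Function.Injective φ := by
  obtain ⟨ψ, _, hl, _⟩ := monomial_inverse hφ
  exact Function.LeftInverse.injective hl

lemma monomial_comp {φ₁ φ₂ : (Fin n → F) → (Fin n → F)} (h1 : IsMonomialMap φ₁)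
    (h2 : IsMonomialMap φ₂) : IsMonomialMap (φ₂ ∘ φ₁) := by
  obtain ⟨π₁, s₁, hs₁⟩ := h1
  obtain ⟨π₂, s₂, hs₂⟩ := h2
  refine ⟨π₂.trans π₁, fun i => s₂ i * s₁ (π₂ i), fun x i => ?_⟩
  simp [hs₁, hs₂, mul_assoc, Equiv.trans_apply]

lemma distToCode_monomial (C : Submodule F (Fin n → F)) {φ : (Fin n → F) → (Fin n → F)}
    (hφ : IsMonomialMap φ) (hC : φ '' (C : Set (Fin n → F)) = (C : Set (Fin n → F)))
    (x : Fin n → F) :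
    distToCode (C : Set (Fin n → F)) (φ x) = distToCode (C : Set (Fin n → F)) x := by
  unfold distToCode
  congr 1
  ext d
  simp only [Set.mem_setOf_eq]
  constructor
  · rintro ⟨c, hc, rfl⟩
    rw [← hC] at hc
    obtain ⟨c', hc', rfl⟩ := hc
    exact ⟨c', hc', (hammingDist_monomial hφ x c').symm⟩
  · rintro ⟨c, hc, rfl⟩
    exact ⟨φ c, hC ▸ Set.mem_image_of_mem φ hc, hammingDist_monomial hφ x c⟩

lemma distToCode_sub (C : Submodule F (Fin n → F)) (x : Fin n → F) {c : Fin n → F}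
    (hc : c ∈ C) :
    distToCode (C : Set (Fin n → F)) (x - c) = distToCode (C : Set (Fin n → F)) x := by
  unfold distToCode
  congr 1
  ext d
  simp only [Set.mem_setOf_eq]
  constructor
  · rintro ⟨c', hc', rfl⟩
    refine ⟨c' + c, C.add_mem hc' hc, ?_⟩
    rw [hammingDist_eq_hammingNorm, hammingDist_eq_hammingNorm]
    congr 1
    abel
  · rintro ⟨c', hc', rfl⟩
    refine ⟨c' - c, C.sub_mem hc' hc, ?_⟩
    rw [hammingDist_eq_hammingNorm, hammingDist_eq_hammingNorm]
    congr 1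
    abel


lemma distSet2_nonempty (C : Submodule F (Fin n → F)) :
    {d : ℕ | ∃ x : Fin n → F, distToCode (C : Set (Fin n → F)) x = d}.Nonempty :=
  ⟨_, 0, rfl⟩

lemma distSet2_bdd (C : Submodule F (Fin n → F)) :
    BddAbove {d : ℕ | ∃ x : Fin n → F, distToCode (C : Set (Fin n → F)) x = d} := by
  refine ⟨n, ?_⟩
  rintro d ⟨x, rfl⟩
  calc distToCode (C : Set (Fin n → F)) x ≤ hammingDist x 0 := distToCode_le C x C.zero_mem
  _ ≤ Fintype.card (Fin n) := hammingDist_le_card_fintype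
  _ = n := Fintype.card_fin n

lemma distToCode_le_coveringRadius (C : Submodule F (Fin n → F)) (x : Fin n → F) :
    distToCode (C : Set (Fin n → F)) x ≤ coveringRadius (C : Set (Fin n → F)) :=
  le_csSup (distSet2_bdd C) ⟨x, rfl⟩

lemma exists_dist_eq (C : Submodule F (Fin n → F)) {l : ℕ}
    (hl : l ≤ coveringRadius (C : Set (Fin n → F))) :
    ∃ x : Fin n → F, distToCode (C : Set (Fin n → F)) x = l := by
  classical
  set ρ := coveringRadius (C : Set (Fin n → F)) with hρ
  obtain ⟨v, hv⟩ : ∃ v : Fin n → F, distToCode (C : Set (Fin n → F)) v = ρ :=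
    Nat.sSup_mem (distSet2_nonempty C) (distSet2_bdd C)
  obtain ⟨c, hc, hvc⟩ := exists_nearest C v
  rw [hv] at hvc
  set D : Finset (Fin n) := {i | v i ≠ c i} with hD
  have hDcard : D.card = ρ := hvc
  obtain ⟨T, hTD, hTcard⟩ : ∃ T ⊆ D, T.card = ρ - l :=
    Finset.exists_subset_card_eq (by omega)
  set x : Fin n → F := fun i => if i ∈ T then c i else v i with hxdef
  have hxv : hammingDist x v = ρ - l := by
    have : ({i | x i ≠ v i} : Finset (Fin n)) = T := by
      ext i
      simp only [Finset.mem_filter, Finset.mem_univ, true_and, hxdef]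
      constructor
      · intro hne
        by_contra hT
        simp [hT] at hne
      · intro hT
        have := hTD hT
        simp only [hD, Finset.mem_filter, Finset.mem_univ, true_and] at this
        simp [hT]
        exact fun e => this e.symm
    unfold hammingDist
    rw [this, hTcard]
  have hxc : hammingDist x c = l := by
    have : ({i | x i ≠ c i} : Finset (Fin n)) = D \ T := by
      ext i
      simp only [Finset.mem_filter, Finset.mem_univ, true_and, Finset.mem_sdiff, hxdef]
      constructor
      · intro hne
        by_cases hT : i ∈ T
        · simp [hT] at hne
        · simp [hT] at hne
          refine ⟨?_, hT⟩
          simp [hD, hne]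
      · rintro ⟨hiD, hT⟩
        simp only [hD, Finset.mem_filter, Finset.mem_univ, true_and] at hiD
        simp [hT, hiD]
    unfold hammingDist
    rw [this, Finset.card_sdiff_of_subset hTD, hDcard, hTcard]
    omega
  refine ⟨x, le_antisymm (hxc ▸ distToCode_le C x hc) ?_⟩
  have h1 : distToCode (C : Set (Fin n → F)) v ≤ hammingDist v x +
      distToCode (C : Set (Fin n → F)) x := distToCode_triangle C v x
  rw [hv, hammingDist_comm v x, hxv] at h1
  omega


lemma mem_cosetOrbit_self (C : Submodule F (Fin n → F)) (v : Fin n → F) :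
    v ∈ cosetOrbit C v :=
  ⟨id, ⟨Equiv.refl _, fun _ => 1, fun x i => by simp⟩, Set.image_id _, by simp [C.zero_mem]⟩

lemma dist_eq_of_mem_orbit (C : Submodule F (Fin n → F)) {v w : Fin n → F}
    (h : w ∈ cosetOrbit C v) :
    distToCode (C : Set (Fin n → F)) w = distToCode (C : Set (Fin n → F)) v := by
  obtain ⟨φ, hφ, hC, hc⟩ := h
  have hw : w = φ v - (φ v - w) := by abel
  rw [hw, distToCode_sub C (φ v) hc, distToCode_monomial C hφ hC]

lemma cosetOrbit_symm (C : Submodule F (Fin n → F)) {v w : Fin n → F}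
    (h : w ∈ cosetOrbit C v) : v ∈ cosetOrbit C w := by
  obtain ⟨φ, hφ, hC, hc⟩ := h
  obtain ⟨ψ, hψ, hl, hr⟩ := monomial_inverse hφ
  have hψC : ψ '' (C : Set (Fin n → F)) = (C : Set (Fin n → F)) := by
    conv_lhs => rw [← hC]
    rw [← Set.image_comp]
    have : ψ ∘ φ = id := funext hl
    rw [this, Set.image_id]
  refine ⟨ψ, hψ, hψC, ?_⟩
  have h1 : ψ w - v = ψ (w - φ v) := by
    rw [monomial_sub hψ, hl]
  rw [h1]
  have hmem : w - φ v ∈ C := by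
    have h2 : w - φ v = -(φ v - w) := by abel
    rw [h2]
    exact C.neg_mem hc
  have h3 : ψ (w - φ v) ∈ ψ '' (C : Set (Fin n → F)) := Set.mem_image_of_mem ψ hmem
  rwa [hψC] at h3

lemma cosetOrbit_trans (C : Submodule F (Fin n → F)) {u v w : Fin n → F}
    (h1 : w ∈ cosetOrbit C v) (h2 : u ∈ cosetOrbit C w) : u ∈ cosetOrbit C v := by
  obtain ⟨φ₁, hφ₁, hC₁, hc₁⟩ := h1
  obtain ⟨φ₂, hφ₂, hC₂, hc₂⟩ := h2
  refine ⟨φ₂ ∘ φ₁, monomial_comp hφ₁ hφ₂, ?_, ?_⟩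
  · rw [Set.image_comp, hC₁, hC₂]
  · have : (φ₂ ∘ φ₁) v - u = φ₂ (φ₁ v) - φ₂ w + (φ₂ w - u) := by
      simp only [Function.comp_apply]; abel
    rw [this, ← monomial_sub hφ₂]
    have h4 : φ₂ (φ₁ v - w) ∈ φ₂ '' (C : Set (Fin n → F)) := Set.mem_image_of_mem φ₂ hc₁
    rw [hC₂] at h4
    exact C.add_mem h4 hc₂

lemma cosetOrbit_eq_of_mem (C : Submodule F (Fin n → F)) {v w : Fin n → F}
    (h : w ∈ cosetOrbit C v) : cosetOrbit C w = cosetOrbit C v := by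
  ext u
  exact ⟨fun hu => cosetOrbit_trans C h hu,
    fun hu => cosetOrbit_trans C (cosetOrbit_symm C h) hu⟩

lemma mem_orbit_of_dist_eq (C : Submodule F (Fin n → F))
    (h : numCosetOrbits C = coveringRadius (C : Set (Fin n → F)) + 1)
    {v w : Fin n → F}
    (hd : distToCode (C : Set (Fin n → F)) v = distToCode (C : Set (Fin n → F)) w) :
    w ∈ cosetOrbit C v := by
  classical
  set ρ := coveringRadius (C : Set (Fin n → F)) with hρ
  set f : Set.range (cosetOrbit C) → Fin (ρ + 1) := fun O =>
    ⟨distToCode (C : Set (Fin n → F)) (Set.mem_range.mp O.2).choose,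
      Nat.lt_succ_of_le (distToCode_le_coveringRadius C _)⟩ with hf
  have frep : ∀ (O : Set.range (cosetOrbit C)) (x : Fin n → F),
      cosetOrbit C x = (O : Set (Fin n → F)) →
      (f O : ℕ) = distToCode (C : Set (Fin n → F)) x := by
    intro O x hx
    have hc := (Set.mem_range.mp O.2).choose_spec
    have : x ∈ cosetOrbit C (Set.mem_range.mp O.2).choose := by
      rw [hc, ← hx]; exact mem_cosetOrbit_self C x
    simpa [hf] using (dist_eq_of_mem_orbit C this).symm
  have fsurj : Function.Surjective f := by
    intro l
    obtain ⟨x, hx⟩ := exists_dist_eq C (Nat.lt_succ_iff.mp l.2)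
    refine ⟨⟨cosetOrbit C x, ⟨x, rfl⟩⟩, ?_⟩
    apply Fin.ext
    rw [frep _ x rfl, hx]
  have fbij : Function.Bijective f := by
    rw [Nat.bijective_iff_surjective_and_card]
    refine ⟨fsurj, ?_⟩
    have hfin : Nat.card (Fin (ρ + 1)) = ρ + 1 := by simp
    rw [hfin]
    exact h
  have horb : cosetOrbit C v = cosetOrbit C w := by
    have : f ⟨cosetOrbit C v, ⟨v, rfl⟩⟩ = f ⟨cosetOrbit C w, ⟨w, rfl⟩⟩ := by
      apply Fin.ext
      rw [frep _ v rfl, frep _ w rfl, hd]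
    have := fbij.1 this
    simpa using congrArg Subtype.val this
  rw [horb]
  exact mem_cosetOrbit_self C w

lemma count_eq (C : Submodule F (Fin n → F)) {v w : Fin n → F}
    (h : w ∈ cosetOrbit C v) (P : ℕ → Prop) :
    Nat.card {y : Fin n → F | hammingDist w y = 1 ∧ P (distToCode (C : Set (Fin n → F)) y)} =
    Nat.card {y : Fin n → F | hammingDist v y = 1 ∧ P (distToCode (C : Set (Fin n → F)) y)} := by
  obtain ⟨φ, hφ, hC, hcm⟩ := h
  set c : Fin n → F := φ v - w with hcdef
  have hw : w = φ v - c := by rw [hcdef]; abel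
  obtain ⟨ψ, hψ, hl, hr⟩ := monomial_inverse hφ
  have hdist : ∀ y : Fin n → F,
      distToCode (C : Set (Fin n → F)) (φ y - c) = distToCode (C : Set (Fin n → F)) y := by
    intro y
    rw [distToCode_sub C (φ y) hcm, distToCode_monomial C hφ hC]
  have hham : ∀ y : Fin n → F, hammingDist w (φ y - c) = hammingDist v y := by
    intro y
    rw [hw, hammingDist_sub_const, hammingDist_monomial hφ]
  have key : {y : Fin n → F | hammingDist w y = 1 ∧ P (distToCode (C : Set (Fin n → F)) y)} =
      (fun y => φ y - c) ''
        {y : Fin n → F | hammingDist v y = 1 ∧ P (distToCode (C : Set (Fin n → F)) y)} := by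
    ext y'
    simp only [Set.mem_setOf_eq, Set.mem_image]
    constructor
    · rintro ⟨h1, h2⟩
      refine ⟨ψ (y' + c), ⟨?_, ?_⟩, ?_⟩
      · rw [← hham (ψ (y' + c)), hr]
        have : y' + c - c = y' := by abel
        rw [this]
        exact h1
      · rw [← hdist (ψ (y' + c)), hr]
        have : y' + c - c = y' := by abel
        rw [this]
        exact h2
      · rw [hr]
        abel
    · rintro ⟨y, ⟨h1, h2⟩, rfl⟩
      exact ⟨(hham y).trans h1, (hdist y).symm ▸ h2⟩
  rw [key]
  exact Nat.card_image_of_injective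
    (fun a b hab => monomial_injective hφ (by
      have : φ a - c + c = φ b - c + c := by rw [hab]
      simpa using this)) _

end CTaux

/-- Every completely transitive linear code is completely regular. -/
theorem completely_transitive_implies_completely_regular
    {F : Type*} [Field F] [Fintype F] [DecidableEq F] {n : ℕ}
    (C : Submodule F (Fin n → F))
    (h : numCosetOrbits C = coveringRadius (C : Set (Fin n → F)) + 1) :
    IsCompletelyRegular (C : Set (Fin n → F)) := by
  classical
  refine ⟨fun l => if hl : ∃ x : Fin n → F, distToCode (C : Set (Fin n → F)) x = l then
      Nat.card {y : Fin n → F | hammingDist hl.choose y = 1 ∧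
        distToCode (C : Set (Fin n → F)) y = l + 1} else 0,
    fun l => if hl : ∃ x : Fin n → F, distToCode (C : Set (Fin n → F)) x = l then
      Nat.card {y : Fin n → F | hammingDist hl.choose y = 1 ∧
        distToCode (C : Set (Fin n → F)) y + 1 = l} else 0,
    ?_⟩
  intro l x hx
  have hl : ∃ x : Fin n → F, distToCode (C : Set (Fin n → F)) x = l := ⟨x, hx⟩
  have hmem : x ∈ cosetOrbit C hl.choose :=
    CTaux.mem_orbit_of_dist_eq C h (hl.choose_spec.trans hx.symm)
  constructor
  · simp only [dif_pos hl]
    exact CTaux.count_eq C hmem (fun d => d = l + 1)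
  · simp only [dif_pos hl]
    exact CTaux.count_eq C hmem (fun d => d + 1 = l)
end

section
/- Let C be a nontrivial linear [n,k,3]_q code (minimum distance 3). Then C is perfect (i.e., C has covering radius 1, so C is a Hamming code) if and only if its dual code C⊥ is equidistant. -/
open Finset

variable {F : Type*} [Field F] [Fintype F] [DecidableEq F]

/-! Let `D = C⊥`, of dimension `m = n - k ≥ 2`. As `D⊥ = C` has no nonzero word of weight `≤ 2`,
`D` restricted to any one or two coordinates is onto, so exactly `q^(m-1)` (resp. `q^(m-2)`)
codewords of `D` vanish at a given coordinate (resp. pair of coordinates). Double counting then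
gives the first two moments of the number of zero coordinates of a codeword of `D`, and
Lagrange's identity turns them into
  `∑_{y, y' ∈ D ∖ 0} (wt y - wt y')² = 2 n (q - 1) q^(m-2) (q^m - 1 - n (q - 1))`.
The left side vanishes iff `D` is equidistant. The right side vanishes iff the radius-one Hamming
balls around the codewords of `C`, which are disjoint as `d = 3`, have total size `q^n`, that is,
iff `C` is perfect. -/

open Module

namespace LinearCode

section DualCode

variable {F ι : Type*} [Field F] [Fintype ι]

def dualCode (C : Submodule F (ι → F)) : Submodule F (ι → F) :=
  LinearMap.BilinForm.orthogonal (dotProductBilin F F) C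

theorem coe_dualCode (C : Submodule F (ι → F)) :
    (dualCode C : Set (ι → F)) = dualSet (C : Set (ι → F)) := rfl

theorem dotProductBilin_isRefl :
    LinearMap.BilinForm.IsRefl (dotProductBilin F F : LinearMap.BilinForm F (ι → F)) :=
  fun x y h => by simpa [dotProduct_comm] using h

theorem dotProductBilin_nondegenerate [DecidableEq ι] :
    LinearMap.BilinForm.Nondegenerate (dotProductBilin F F : LinearMap.BilinForm F (ι → F)) :=
  ⟨fun x hx => funext fun i => by simpa using hx (Pi.single i 1),
    fun y hy => funext fun i => by simpa using hy (Pi.single i 1)⟩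

theorem finrank_dualCode (C : Submodule F (ι → F)) :
    finrank F (dualCode C) = Fintype.card ι - finrank F C := by
  classical
  rw [dualCode, LinearMap.BilinForm.finrank_orthogonal dotProductBilin_nondegenerate,
    finrank_fintype_fun_eq_card]

theorem dualCode_dualCode (C : Submodule F (ι → F)) : dualCode (dualCode C) = C := by
  classical
  exact LinearMap.BilinForm.orthogonal_orthogonal dotProductBilin_nondegenerate
    dotProductBilin_isRefl C

theorem exists_mem_dualCode_ne_zero_of_lt_top {C : Submodule F (ι → F)} (hC : C < ⊤) :
    ∃ x ∈ dualCode C, x ≠ 0 := by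
  apply Submodule.exists_mem_ne_zero_of_ne_bot
  rw [ne_eq, ← Submodule.finrank_eq_zero, finrank_dualCode]
  have := Submodule.finrank_lt hC.ne
  rw [finrank_fintype_fun_eq_card] at this
  omega

end DualCode

section Hamming

variable {F ι : Type*} [DecidableEq F] [Fintype ι]

theorem hammingDist_eq_hammingNorm_sub [AddCommGroup F] (x y : ι → F) :
    hammingDist x y = hammingNorm (x - y) := by
  rw [hammingDist_comm, hammingDist_eq_hammingNorm, neg_add_eq_sub]

theorem card_zeros_add_hammingNorm [Zero F] (v : ι → F) :
    #{i | v i = 0} + hammingNorm v = Fintype.card ι := by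
  simpa [hammingNorm] using Finset.card_filter_add_card_filter_not (s := univ) (fun i => v i = 0)

theorem hammingNorm_le_one_iff [Zero F] [DecidableEq ι] {v : ι → F} :
    hammingNorm v ≤ 1 ↔ v = 0 ∨ ∃ i a, a ≠ 0 ∧ Pi.single i a = v := by
  rw [hammingNorm, Finset.card_le_one]
  simp only [Finset.mem_filter, Finset.mem_univ, true_and]
  constructor
  · intro h
    by_cases hv : v = 0
    · exact Or.inl hv
    obtain ⟨i, hi⟩ := Function.ne_iff.mp hv
    refine Or.inr ⟨i, v i, hi, funext fun j => ?_⟩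
    by_cases hji : j = i
    · subst hji
      simp
    · rw [Pi.single_eq_of_ne hji]
      by_contra hj
      exact hji (h j (Ne.symm hj) i hi)
  · rintro (rfl | ⟨i, a, -, rfl⟩) j hj l hl
    · simp at hj
    · rw [Pi.single_apply] at hj hl
      grind

theorem card_hammingNorm_le_one [Zero F] [Fintype F] [DecidableEq ι] :
    #{v : ι → F | hammingNorm v ≤ 1} = 1 + Fintype.card ι * (Fintype.card F - 1) := by
  set single : ι × {a : F // a ≠ 0} → ι → F := fun p => Pi.single p.1 p.2.1
  have hball : ({v | hammingNorm v ≤ 1} : Finset (ι → F)) = insert 0 (univ.image single) := by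
    ext v
    simp [hammingNorm_le_one_iff, single, eq_comm]
  have hinj : Function.Injective single := by
    rintro ⟨i, a, ha⟩ ⟨j, b, hb⟩ h
    have hi := congrFun h i
    obtain rfl : i = j := by
      by_contra hij
      exact ha (by simpa [single, Pi.single_eq_of_ne hij] using hi)
    simp_all [single]
  have h0 : (0 : ι → F) ∉ univ.image single := by
    simp [single, Pi.single_eq_zero_iff]
  rw [hball, card_insert_of_notMem h0, card_image_of_injective _ hinj, card_univ,
    Fintype.card_prod, Fintype.card_subtype_compl, Fintype.card_subtype_eq, add_comm]

theorem minDist_le_hammingNorm [Field F] {C : Submodule F (ι → F)} {c : ι → F} (hc : c ∈ C)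
    (hc0 : c ≠ 0) : minDist (C : Set (ι → F)) ≤ hammingNorm c :=
  Nat.sInf_le ⟨c, hc, 0, C.zero_mem, hc0, hammingDist_zero_right c⟩

theorem isEquidistant_iff [Field F] {D : Submodule F (ι → F)} :
    IsEquidistant (D : Set (ι → F)) ↔
      ∀ y y' : D, y ≠ 0 → y' ≠ 0 → hammingNorm (y : ι → F) = hammingNorm (y' : ι → F) := by
  constructor
  · rintro ⟨d, hd⟩ y y' hy hy'
    have hwt : ∀ z : D, z ≠ 0 → hammingNorm (z : ι → F) = d := fun z hz => by
      simpa using hd z z.2 0 D.zero_mem (by simpa using hz)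
    rw [hwt y hy, hwt y' hy']
  · intro h
    by_cases hD : ∃ y₀ : D, y₀ ≠ 0
    · obtain ⟨y₀, hy₀⟩ := hD
      refine ⟨hammingNorm (y₀ : ι → F), fun x hx y hy hxy => ?_⟩
      rw [hammingDist_eq_hammingNorm_sub]
      exact h ⟨x - y, D.sub_mem hx hy⟩ y₀ (by simpa [sub_eq_zero] using hxy) hy₀
    · push Not at hD
      refine ⟨0, fun x hx y hy hxy => absurd ?_ hxy⟩
      simpa using congrArg Subtype.val ((hD ⟨x, hx⟩).trans (hD ⟨y, hy⟩).symm)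

end Hamming

section CoveringRadius

variable {F ι : Type*} [DecidableEq F] [Fintype ι]

theorem distToCode_le_iff {C : Set (ι → F)} (hC : C.Nonempty) {x : ι → F} {r : ℕ} :
    distToCode C x ≤ r ↔ ∃ c ∈ C, hammingDist x c ≤ r := by
  constructor
  · intro h
    obtain ⟨c₀, hc₀⟩ := hC
    have hne : {d | ∃ c ∈ C, hammingDist x c = d}.Nonempty := ⟨_, c₀, hc₀, rfl⟩
    obtain ⟨c, hc, hxc⟩ := Nat.sInf_mem hne
    exact ⟨c, hc, hxc.trans_le h⟩
  · rintro ⟨c, hc, hxc⟩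
    exact (Nat.sInf_le (s := {d | ∃ c ∈ C, hammingDist x c = d}) ⟨c, hc, rfl⟩).trans hxc

theorem coveringRadius_le_iff {C : Set (ι → F)} (hC : C.Nonempty) {r : ℕ} :
    coveringRadius C ≤ r ↔ ∀ x, ∃ c ∈ C, hammingDist x c ≤ r := by
  have hbdd : BddAbove {d | ∃ x, distToCode C x = d} := by
    refine ⟨Fintype.card ι, ?_⟩
    rintro _ ⟨x, rfl⟩
    obtain ⟨c, hc⟩ := hC
    exact (distToCode_le_iff ⟨c, hc⟩).mpr ⟨c, hc, hammingDist_le_card_fintype⟩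
  rw [coveringRadius, csSup_le_iff hbdd ⟨_, hC.some, rfl⟩]
  simp only [Set.mem_ofPred_eq, forall_exists_index, forall_apply_eq_imp_iff]
  exact forall_congr' fun x => distToCode_le_iff hC

theorem coveringRadius_eq_one_iff {C : Set (ι → F)} (hC : C.Nonempty) (hCu : C ≠ Set.univ) :
    coveringRadius C = 1 ↔ ∀ x, ∃ c ∈ C, hammingDist x c ≤ 1 := by
  have hpos : ¬ coveringRadius C ≤ 0 := by
    rw [coveringRadius_le_iff hC]
    refine fun h => hCu (Set.eq_univ_of_forall fun x => ?_)
    obtain ⟨c, hc, hxc⟩ := h x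
    rwa [hammingDist_eq_zero.mp (Nat.le_zero.mp hxc)]
  rw [← coveringRadius_le_iff hC]
  omega

variable [Field F]

theorem eq_of_sub_mem_of_hammingNorm_le_one {C : Submodule F (ι → F)}
    (hC : ∀ c ∈ C, c ≠ 0 → 3 ≤ hammingNorm c) {u v : ι → F} (hu : hammingNorm u ≤ 1)
    (hv : hammingNorm v ≤ 1) (huv : u - v ∈ C) : u = v := by
  by_contra hne
  have h2 : hammingNorm (u - v) ≤ 2 := by
    have := hammingDist_triangle u 0 v
    rw [hammingDist_zero_right, hammingDist_zero_left, hammingDist_eq_hammingNorm_sub] at this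
    omega
  have := hC _ huv (sub_ne_zero.mpr hne)
  omega

theorem coveringRadius_eq_one_iff_card_quotient [Fintype F] [DecidableEq ι]
    {C : Submodule F (ι → F)} (hC : ∀ c ∈ C, c ≠ 0 → 3 ≤ hammingNorm c) (hCtop : C ≠ ⊤) :
    coveringRadius (C : Set (ι → F)) = 1 ↔
      Nat.card ((ι → F) ⧸ C) = 1 + Fintype.card ι * (Fintype.card F - 1) := by
  classical
  set ball : Finset (ι → F) := {v | hammingNorm v ≤ 1}
  have hinj : Set.InjOn C.mkQ ball := fun u hu v hv huv =>
    eq_of_sub_mem_of_hammingNorm_le_one hC (by simpa [ball] using hu) (by simpa [ball] using hv)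
      ((Submodule.Quotient.eq C).mp huv)
  rw [coveringRadius_eq_one_iff ⟨0, C.zero_mem⟩ (by simpa using hCtop), ← card_hammingNorm_le_one,
    ← card_image_of_injOn hinj, Nat.card_eq_fintype_card, eq_comm, Finset.card_eq_iff_eq_univ,
    Finset.eq_univ_iff_forall, C.mkQ_surjective.forall]
  refine forall_congr' fun x => ⟨fun ⟨c, hc, hxc⟩ => ?_, fun hx => ?_⟩
  · refine Finset.mem_image.mpr ⟨x - c, by simpa [ball, ← hammingDist_eq_hammingNorm_sub], ?_⟩
    simpa [Submodule.Quotient.eq] using C.neg_mem hc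
  · obtain ⟨b, hb, hbx⟩ := Finset.mem_image.mp hx
    refine ⟨x - b, ?_, ?_⟩
    · simpa using C.neg_mem ((Submodule.Quotient.eq C).mp hbx)
    · simpa [ball, hammingDist_eq_hammingNorm_sub] using hb

end CoveringRadius

theorem sum_sum_sub_sq {α R : Type*} [CommRing R] (s : Finset α) (f : α → R) :
    ∑ a ∈ s, ∑ b ∈ s, (f a - f b) ^ 2 = 2 * (#s * ∑ a ∈ s, f a ^ 2 - (∑ a ∈ s, f a) ^ 2) := by
  simp only [sub_sq, Finset.sum_add_distrib, Finset.sum_sub_distrib, Finset.sum_const,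
    nsmul_eq_mul, ← Finset.mul_sum, ← Finset.sum_mul]
  ring

section Counting

variable {F ι : Type*} [Field F] [Fintype ι]

theorem restrict_surjective (D : Submodule F (ι → F)) [DecidableEq F] (s : Finset ι)
    (hs : ∀ x ∈ dualCode D, x ≠ 0 → #s < hammingNorm x) :
    Function.Surjective (LinearMap.funLeft F F ((↑) : s → ι) ∘ₗ D.subtype) := by
  classical
  set r := LinearMap.funLeft F F ((↑) : s → ι) ∘ₗ D.subtype
  rw [← LinearMap.range_eq_top]
  by_contra hr
  -- extending by zero a word orthogonal to the range of `r` gives a word of `D⊥` of weight `≤ #s`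
  obtain ⟨c, hc, hc0⟩ := exists_mem_dualCode_ne_zero_of_lt_top (lt_top_iff_ne_top.mpr hr)
  set x : ι → F := fun i => if h : i ∈ s then c ⟨i, h⟩ else 0
  have hx : x ∈ dualCode D := by
    intro y hy
    have hry := hc (r ⟨y, hy⟩) (LinearMap.mem_range_self r _)
    simp only [dotProductBilin_apply_apply, dotProduct] at hry ⊢
    calc ∑ i, y i * x i = ∑ i ∈ s, y i * x i :=
          (Finset.sum_subset (Finset.subset_univ s) fun i _ hi => by simp [x, hi]).symm
      _ = ∑ i : s, y i * c i := by
          rw [← Finset.sum_coe_sort s]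
          simp [x]
      _ = 0 := hry
  have hx0 : x ≠ 0 := by
    obtain ⟨i, hi⟩ := Function.ne_iff.mp hc0
    exact Function.ne_iff.mpr ⟨i, by simpa [x] using hi⟩
  have hxs : hammingNorm x ≤ #s :=
    Finset.card_le_card fun i hi => by
      by_contra his
      simp [x, his] at hi
  exact absurd (hs x hx hx0) (not_lt.mpr hxs)

variable [Fintype F] [DecidableEq F]

theorem card_vanishing_on (D : Submodule F (ι → F)) [Fintype D] (s : Finset ι)
    (hs : ∀ x ∈ dualCode D, x ≠ 0 → #s < hammingNorm x) :
    #{y : D | ∀ i ∈ s, (y : ι → F) i = 0} = Fintype.card F ^ (finrank F D - #s) := by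
  set r := LinearMap.funLeft F F ((↑) : s → ι) ∘ₗ D.subtype
  have hrank := LinearMap.finrank_range_add_finrank_ker r
  rw [LinearMap.range_eq_top.mpr (restrict_surjective D s hs), finrank_top,
    finrank_fintype_fun_eq_card, Fintype.card_coe] at hrank
  have hker : {y : D // ∀ i ∈ s, (y : ι → F) i = 0} ≃ LinearMap.ker r :=
    Equiv.subtypeEquivRight fun y => by simp [r, funext_iff, LinearMap.funLeft]
  rw [← Fintype.card_subtype, ← Nat.card_eq_fintype_card, Nat.card_congr hker,
    Module.natCard_eq_pow_finrank (K := F), Nat.card_eq_fintype_card]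
  congr 1
  omega

variable {D : Submodule F (ι → F)} [Fintype D]

theorem sum_card_zeros (hD : ∀ x ∈ dualCode D, x ≠ 0 → 3 ≤ hammingNorm x) :
    ∑ y : D, #{i | (y : ι → F) i = 0} =
      Fintype.card ι * Fintype.card F ^ (finrank F D - 1) := by
  calc ∑ y : D, #{i | (y : ι → F) i = 0}
      = ∑ i : ι, #{y : D | (y : ι → F) i = 0} :=
        Finset.sum_card_bipartiteAbove_eq_sum_card_bipartiteBelow
          (r := fun (y : D) i => (y : ι → F) i = 0)
    _ = ∑ i : ι, Fintype.card F ^ (finrank F D - 1) := Finset.sum_congr rfl fun i _ => by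
        simpa using card_vanishing_on D {i} fun x hx hx0 => by
          have := hD x hx hx0
          simp
          omega
    _ = _ := by simp

variable [DecidableEq ι]

theorem sum_card_zeros_sq_eq_sum_sum (hD : ∀ x ∈ dualCode D, x ≠ 0 → 3 ≤ hammingNorm x) :
    ∑ y : D, #{i | (y : ι → F) i = 0} ^ 2 =
      ∑ i : ι, ∑ j : ι, Fintype.card F ^ (finrank F D - #{i, j}) := by
  calc ∑ y : D, #{i | (y : ι → F) i = 0} ^ 2
      = ∑ y : D, #{p : ι × ι | (y : ι → F) p.1 = 0 ∧ (y : ι → F) p.2 = 0} := by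
        simp only [sq, ← Finset.card_product, ← Finset.filter_product, Finset.univ_product_univ]
    _ = ∑ p : ι × ι, #{y : D | (y : ι → F) p.1 = 0 ∧ (y : ι → F) p.2 = 0} :=
        Finset.sum_card_bipartiteAbove_eq_sum_card_bipartiteBelow
          (r := fun (y : D) (p : ι × ι) => (y : ι → F) p.1 = 0 ∧ (y : ι → F) p.2 = 0)
    _ = ∑ i : ι, ∑ j : ι, Fintype.card F ^ (finrank F D - #{i, j}) := by
        rw [Fintype.sum_prod_type]
        refine Finset.sum_congr rfl fun i _ => Finset.sum_congr rfl fun j _ => ?_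
        simpa using card_vanishing_on D {i, j} fun x hx hx0 =>
          (Finset.card_le_two).trans_lt (hD x hx hx0)

theorem sum_card_zeros_sq (hD : ∀ x ∈ dualCode D, x ≠ 0 → 3 ≤ hammingNorm x) :
    ∑ y : D, (#{i | (y : ι → F) i = 0} : ℤ) ^ 2 =
      Fintype.card ι * Fintype.card F ^ (finrank F D - 1) +
        Fintype.card ι * (Fintype.card ι - 1) * Fintype.card F ^ (finrank F D - 2) := by
  have hrow : ∀ i : ι, ∑ j : ι, (Fintype.card F : ℤ) ^ (finrank F D - #{i, j}) =
      Fintype.card F ^ (finrank F D - 1) +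
        (Fintype.card ι - 1) * Fintype.card F ^ (finrank F D - 2) := by
    intro i
    have hpair : ∀ j, (Fintype.card F : ℤ) ^ (finrank F D - #{i, j}) =
        Fintype.card F ^ (finrank F D - 2) + if i = j then
          (Fintype.card F : ℤ) ^ (finrank F D - 1) - Fintype.card F ^ (finrank F D - 2) else 0 := by
      intro j
      by_cases hij : i = j
      · simp [hij]
      · simp [hij, Finset.card_pair hij]
    simp only [hpair, Finset.sum_add_distrib, Finset.sum_ite_eq, Finset.mem_univ, if_true,
      Finset.sum_const, Finset.card_univ, nsmul_eq_mul]
    ring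
  have h := congrArg (Nat.cast : ℕ → ℤ) (sum_card_zeros_sq_eq_sum_sum hD)
  push_cast at h
  rw [h, Finset.sum_congr rfl fun i _ => hrow i, Finset.sum_const, Finset.card_univ, nsmul_eq_mul]
  ring

theorem sum_sum_sub_sq_hammingNorm (hD : ∀ x ∈ dualCode D, x ≠ 0 → 3 ≤ hammingNorm x)
    (hm : 2 ≤ finrank F D) :
    ∑ y ∈ univ.erase (0 : D), ∑ y' ∈ univ.erase (0 : D),
      ((hammingNorm (y : ι → F) : ℤ) - hammingNorm (y' : ι → F)) ^ 2 =
    2 * Fintype.card ι * (Fintype.card F - 1) * Fintype.card F ^ (finrank F D - 2) *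
      (Fintype.card F ^ finrank F D - 1 - Fintype.card ι * (Fintype.card F - 1)) := by
  set Z : D → ℤ := fun y => #{i | (y : ι → F) i = 0}
  have hwt : ∀ y : D, (hammingNorm (y : ι → F) : ℤ) = Fintype.card ι - Z y := fun y => by
    rw [← card_zeros_add_hammingNorm (y : ι → F)]
    push_cast
    ring
  have hZ0 : Z 0 = Fintype.card ι := by simp [Z]
  have hcard : (#(univ.erase (0 : D)) : ℤ) = Fintype.card F ^ finrank F D - 1 := by
    have := Finset.card_erase_add_one (mem_univ (0 : D))
    rw [card_univ, Module.card_eq_pow_finrank (K := F)] at this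
    rw [eq_sub_iff_add_eq]
    exact_mod_cast this
  have hsum : ∑ y : D, Z y = Fintype.card ι * Fintype.card F ^ (finrank F D - 1) := by
    have h := congrArg (Nat.cast : ℕ → ℤ) (sum_card_zeros hD)
    push_cast at h
    exact h
  obtain ⟨t, ht⟩ : ∃ t, finrank F D = t + 2 := ⟨_, (Nat.sub_add_cancel hm).symm⟩
  calc _ = ∑ y ∈ univ.erase (0 : D), ∑ y' ∈ univ.erase (0 : D), (Z y - Z y') ^ 2 := by
        simp only [hwt]
        ring_nf
    _ = 2 * (#(univ.erase (0 : D)) * ∑ y ∈ univ.erase (0 : D), Z y ^ 2 -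
          (∑ y ∈ univ.erase (0 : D), Z y) ^ 2) := sum_sum_sub_sq _ _
    _ = _ := by
      rw [Finset.sum_erase_eq_sub (mem_univ _), Finset.sum_erase_eq_sub (mem_univ _), hcard, hZ0,
        hsum, sum_card_zeros_sq hD, ht, show t + 2 - 1 = t + 1 by omega, add_tsub_cancel_right]
      ring

end Counting

theorem isEquidistant_iff_card_eq {F ι : Type*} [Field F] [Fintype F] [DecidableEq F] [Fintype ι]
    [DecidableEq ι] {D : Submodule F (ι → F)}
    (hD : ∀ x ∈ dualCode D, x ≠ 0 → 3 ≤ hammingNorm x) (hm : 2 ≤ finrank F D) :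
    IsEquidistant (D : Set (ι → F)) ↔
      Fintype.card F ^ finrank F D = 1 + Fintype.card ι * (Fintype.card F - 1) := by
  classical
  have hn : finrank F D ≤ Fintype.card ι :=
    (Submodule.finrank_le D).trans_eq (finrank_fintype_fun_eq_card F)
  have hq : 1 < Fintype.card F := Fintype.one_lt_card
  have hsq : ∀ y y' : D, 0 ≤ ((hammingNorm (y : ι → F) : ℤ) - hammingNorm (y' : ι → F)) ^ 2 :=
    fun _ _ => sq_nonneg _
  have hinner : ∀ y : D, ∑ y' ∈ univ.erase (0 : D),
      ((hammingNorm (y : ι → F) : ℤ) - hammingNorm (y' : ι → F)) ^ 2 = 0 ↔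
        ∀ y' ∈ univ.erase (0 : D),
          ((hammingNorm (y : ι → F) : ℤ) - hammingNorm (y' : ι → F)) ^ 2 = 0 :=
    fun y => Finset.sum_eq_zero_iff_of_nonneg fun y' _ => hsq y y'
  have hfactor :
      (2 * Fintype.card ι * (Fintype.card F - 1) * Fintype.card F ^ (finrank F D - 2) : ℤ) ≠ 0 := by
    have : (0 : ℤ) < Fintype.card F - 1 := by linarith [(Nat.one_lt_cast (α := ℤ)).mpr hq]
    have : (0 : ℤ) < Fintype.card ι := by exact_mod_cast (by omega : 0 < Fintype.card ι)
    positivity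
  rw [isEquidistant_iff]
  calc _ ↔ ∑ y ∈ univ.erase (0 : D), ∑ y' ∈ univ.erase (0 : D),
        ((hammingNorm (y : ι → F) : ℤ) - hammingNorm (y' : ι → F)) ^ 2 = 0 := by
        rw [Finset.sum_eq_zero_iff_of_nonneg fun y _ => Finset.sum_nonneg fun y' _ => hsq y y']
        simp only [hinner, Finset.mem_erase, Finset.mem_univ, and_true,
          pow_eq_zero_iff two_ne_zero, sub_eq_zero, Nat.cast_inj]
        tauto
    _ ↔ _ := by
        rw [sum_sum_sub_sq_hammingNorm hD hm, mul_eq_zero, or_iff_right hfactor, sub_sub,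
          sub_eq_zero]
        zify [hq.le]

end LinearCode

open LinearCode

theorem perfect_iff_dual_equidistant_general
    {F : Type*} [Field F] [Fintype F] [DecidableEq F] {n k : ℕ}
    (C : Submodule F (Fin n → F))
    (hk : Module.finrank F C = k)
    (hkn : k + 2 ≤ n)
    (hd : minDist (C : Set (Fin n → F)) = 3) :
    coveringRadius (C : Set (Fin n → F)) = 1 ↔
      IsEquidistant (dualSet (C : Set (Fin n → F))) := by
  have hC : ∀ c ∈ C, c ≠ 0 → 3 ≤ hammingNorm c := fun c hc hc0 =>
    hd ▸ minDist_le_hammingNorm hc hc0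
  have hm : finrank F (dualCode C) = n - k := by rw [finrank_dualCode, hk, Fintype.card_fin]
  have hCtop : C ≠ ⊤ := by
    rintro rfl
    rw [finrank_top, finrank_fin_fun] at hk
    omega
  have hquot : Nat.card ((Fin n → F) ⧸ C) = Fintype.card F ^ finrank F (dualCode C) := by
    rw [Module.natCard_eq_pow_finrank (K := F), Submodule.finrank_quotient, finrank_fin_fun, hk,
      hm, Nat.card_eq_fintype_card]
  rw [coveringRadius_eq_one_iff_card_quotient hC hCtop, hquot, ← coe_dualCode,
    isEquidistant_iff_card_eq ((dualCode_dualCode C).symm ▸ hC) (by omega), Fintype.card_fin]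

/-- a nontrivial linear code with minimum distance 3 is perfect (covering
radius 1, i.e. a Hamming code) iff its dual is equidistant. -/
theorem perfect_iff_dual_equidistant
    {F : Type*} [Field F] [Fintype F] [DecidableEq F] {n k : ℕ}
    (C : Submodule F (Fin n → F))
    (hk : Module.finrank F C = k)
    (hk2 : 2 ≤ k) (hkn : k + 2 ≤ n)
    (hd : minDist (C : Set (Fin n → F)) = 3) :
    coveringRadius (C : Set (Fin n → F)) = 1 ↔
      IsEquidistant (dualSet (C : Set (Fin n → F))) :=
  perfect_iff_dual_equidistant_general C hk hkn hd
end

section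
/- Let C be a linear code in 𝔽_q^n with covering radius ρ, let u ≥ 1, and let C^{+u} = {(c|y) : c ∈ C, y ∈ 𝔽_q^u} ⊆ 𝔽_q^{n+u}. Then C is completely regular if and only if C^{+u} is completely regular; moreover, in this case both codes have the same intersection numbers b_i and c_i, i.e., if C has intersection numbers b_i, c_i, a_i = (q−1)n − b_i − c_i and C^{+u} has intersection numbers b'_i, c'_i, a'_i = (q−1)(n+u) − b'_i − c'_i, then a'_i = a_i + (q−1)u, b'_i = b_i and c'_i = c_i for all i = 0, 1, …, ρ. -/
open Finset

variable {F : Type*} [Field F] [Fintype F] [DecidableEq F]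

namespace CRHelp
set_option linter.unusedSectionVars false

variable {n u : ℕ}

lemma hammingDist_append (a c : Fin n → F) (b d : Fin u → F) :
    hammingDist (Fin.append a b) (Fin.append c d) = hammingDist a c + hammingDist b d := by
  classical
  simp only [hammingDist, Finset.card_filter]
  rw [Fin.sum_univ_add]
  simp [Fin.append_left, Fin.append_right]

def leftPart (z : Fin (n + u) → F) : Fin n → F := fun i => z (Fin.castAdd u i)
def rightPart (z : Fin (n + u) → F) : Fin u → F := fun j => z (Fin.natAdd n j)

lemma append_parts (z : Fin (n + u) → F) : Fin.append (leftPart z) (rightPart z) = z := by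
  funext i
  refine Fin.addCases (fun i => ?_) (fun i => ?_) i
  · rw [Fin.append_left]; rfl
  · rw [Fin.append_right]; rfl

lemma rightPart_append (w : Fin n → F) (r : Fin u → F) : rightPart (Fin.append w r) = r := by
  funext j; exact Fin.append_right _ _ _

lemma hammingDist_append' (z : Fin (n + u) → F) (c : Fin n → F) (d : Fin u → F) :
    hammingDist z (Fin.append c d) =
      hammingDist (leftPart z) c + hammingDist (rightPart z) d := by
  conv_lhs => rw [← append_parts z]
  rw [hammingDist_append]

lemma leftPart_append (w : Fin n → F) (r : Fin u → F) : leftPart (Fin.append w r) = w := by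
  funext i; exact Fin.append_left _ _ _

lemma distToCode_le {ι : Type*} [Fintype ι] (C : Set (ι → F)) {c : ι → F} (hc : c ∈ C)
    (x : ι → F) : distToCode C x ≤ hammingDist x c :=
  Nat.sInf_le ⟨c, hc, rfl⟩

lemma exists_nearest {ι : Type*} [Fintype ι] (C : Set (ι → F)) (hC : C.Nonempty)
    (x : ι → F) : ∃ c ∈ C, hammingDist x c = distToCode C x := by
  obtain ⟨c, hc⟩ := hC
  have hne : {d : ℕ | ∃ c ∈ C, hammingDist x c = d}.Nonempty := ⟨hammingDist x c, c, hc, rfl⟩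
  exact Nat.sInf_mem hne

lemma distToCode_triangle {ι : Type*} [Fintype ι] (C : Set (ι → F)) (hC : C.Nonempty)
    (x y : ι → F) : distToCode C x ≤ hammingDist x y + distToCode C y := by
  obtain ⟨c, hc, hd⟩ := exists_nearest C hC y
  calc distToCode C x ≤ hammingDist x c := distToCode_le C hc x
    _ ≤ hammingDist x y + hammingDist y c := hammingDist_triangle _ _ _
    _ = hammingDist x y + distToCode C y := by rw [hd]

end CRHelp

namespace CRHelp
set_option linter.unusedSectionVars false
variable {n u : ℕ}

lemma distToCode_append (C : Set (Fin n → F)) (hC : C.Nonempty) (z : Fin (n + u) → F) :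
    distToCode (appendCode u C) z = distToCode C (leftPart z) := by
  apply le_antisymm
  · obtain ⟨c, hc, hd⟩ := exists_nearest C hC (leftPart z)
    have hmem : Fin.append c (rightPart z) ∈ appendCode u C := ⟨c, hc, rightPart z, rfl⟩
    have := distToCode_le (appendCode u C) hmem z
    rwa [hammingDist_append', hammingDist_self, add_zero, hd] at this
  · have hne : (appendCode u C).Nonempty := by
      obtain ⟨c, hc⟩ := hC
      exact ⟨Fin.append c 0, c, hc, 0, rfl⟩
    obtain ⟨w, hw, hd⟩ := exists_nearest (appendCode u C) hne z
    obtain ⟨c, hc, y, rfl⟩ := hw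
    rw [← hd, hammingDist_append']
    calc distToCode C (leftPart z)
        ≤ hammingDist (leftPart z) c := distToCode_le C hc _
      _ ≤ _ := Nat.le_add_right _ _

lemma neighbor_set_eq (C : Set (Fin n → F)) (hC : C.Nonempty) (z : Fin (n + u) → F)
    (Q : ℕ → Prop) (hQ : ¬ Q (distToCode C (leftPart z))) :
    {y : Fin (n + u) → F | hammingDist z y = 1 ∧ Q (distToCode (appendCode u C) y)} =
      (fun w => Fin.append w (rightPart z)) ''
        {w : Fin n → F | hammingDist (leftPart z) w = 1 ∧ Q (distToCode C w)} := by
  ext y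
  constructor
  · rintro ⟨h1, h2⟩
    rw [distToCode_append C hC] at h2
    have hsplit : hammingDist (leftPart z) (leftPart y) + hammingDist (rightPart z) (rightPart y) = 1 := by
      have h1' := h1
      rw [← append_parts y, hammingDist_append'] at h1'
      exact h1'
    have hL : hammingDist (leftPart z) (leftPart y) = 1 := by
      rcases Nat.eq_zero_or_pos (hammingDist (leftPart z) (leftPart y)) with h0 | hpos
      · exfalso
        have : leftPart z = leftPart y := eq_of_hammingDist_eq_zero h0
        rw [← this] at h2
        exact hQ h2
      · omega
    have hR : rightPart z = rightPart y := by
      apply eq_of_hammingDist_eq_zero; omega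
    refine ⟨leftPart y, ⟨hL, h2⟩, ?_⟩
    simp only
    rw [hR, append_parts]
  · rintro ⟨w, ⟨hw1, hw2⟩, rfl⟩
    constructor
    · rw [hammingDist_append', hw1, hammingDist_self]
    · rw [distToCode_append C hC, leftPart_append]
      exact hw2

lemma neighbor_card_eq (C : Set (Fin n → F)) (hC : C.Nonempty) (z : Fin (n + u) → F)
    (Q : ℕ → Prop) (hQ : ¬ Q (distToCode C (leftPart z))) :
    Nat.card {y : Fin (n + u) → F | hammingDist z y = 1 ∧ Q (distToCode (appendCode u C) y)} =
      Nat.card {w : Fin n → F | hammingDist (leftPart z) w = 1 ∧ Q (distToCode C w)} := by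
  rw [Nat.card_coe_set_eq, Nat.card_coe_set_eq, neighbor_set_eq C hC z Q hQ]
  apply Set.ncard_image_of_injective
  intro w w' h
  have := congrArg leftPart h
  rwa [leftPart_append, leftPart_append] at this

end CRHelp

namespace CRHelp
set_option linter.unusedSectionVars false
variable {n u : ℕ}

lemma hd_update (x : Fin n → F) (j : Fin n) (a : F) (h : a ≠ x j) :
    hammingDist x (Function.update x j a) = 1 := by
  have : ({i | x i ≠ Function.update x j a i} : Finset (Fin n)) = {j} := by
    ext i
    by_cases hij : i = j
    · subst hij; simp [Function.update_self, Ne.symm h]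
    · simp [Function.update_of_ne hij, hij]
  rw [hammingDist, this, Finset.card_singleton]

lemma hd_update_toward (x c : Fin n → F) (j : Fin n) (h : x j ≠ c j) :
    hammingDist (Function.update x j (c j)) c = hammingDist x c - 1 := by
  have hset : ({i | Function.update x j (c j) i ≠ c i} : Finset (Fin n)) =
      ({i | x i ≠ c i} : Finset (Fin n)).erase j := by
    ext i
    by_cases hij : i = j
    · subst hij; simp [Function.update_self]
    · simp [Function.update_of_ne hij, hij]
  rw [hammingDist, hammingDist, hset, Finset.card_erase_of_mem]
  simp [h]

lemma exists_dist_le (C : Set (Fin n → F)) (hC : C.Nonempty) (x : Fin n → F) :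
    ∀ i ≤ distToCode C x, ∃ y, distToCode C y = i := by
  generalize h : distToCode C x = d
  induction d generalizing x with
  | zero =>
    intro i hi
    interval_cases i
    exact ⟨x, h⟩
  | succ d ih =>
    intro i hi
    rcases Nat.lt_succ_iff_lt_or_eq.mp (Nat.lt_succ_of_le hi) with hlt | rfl
    swap
    · exact ⟨x, h⟩
    obtain ⟨c, hc, hcd⟩ := exists_nearest C hC x
    rw [h] at hcd
    have hxc : x ≠ c := by
      intro he; rw [he, hammingDist_self] at hcd; omega
    obtain ⟨j, hj⟩ := Function.ne_iff.mp hxc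
    set y := Function.update x j (c j) with hy
    have hxy : hammingDist x y = 1 := hd_update x j (c j) (Ne.symm hj)
    have hyc : hammingDist y c = d := by rw [hy, hd_update_toward x c j hj, hcd]; omega
    have hle : distToCode C y ≤ d := hyc ▸ distToCode_le C hc y
    have hge : d ≤ distToCode C y := by
      have := distToCode_triangle C hC x y
      rw [h, hxy] at this
      omega
    exact ih y (le_antisymm hle hge) i (by omega)

lemma neighbors_subset_range (x : Fin n → F) :
    {y : Fin n → F | hammingDist x y = 1} ⊆
      Set.range (fun p : Fin n × {v : F // v ≠ 0} => Function.update x p.1 (x p.1 + p.2.1)) := by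
  intro y hy
  simp only [Set.mem_setOf_eq] at hy
  obtain ⟨j, hj⟩ : ∃ j, ({i | x i ≠ y i} : Finset (Fin n)) = {j} :=
    Finset.card_eq_one.mp hy
  have hxj : x j ≠ y j := by
    have : j ∈ ({i | x i ≠ y i} : Finset (Fin n)) := by rw [hj]; exact Finset.mem_singleton_self j
    simpa using this
  have hother : ∀ i, i ≠ j → x i = y i := by
    intro i hij
    by_contra hne
    have : i ∈ ({i | x i ≠ y i} : Finset (Fin n)) := by simpa using hne
    rw [hj] at this
    exact hij (Finset.mem_singleton.mp this)
  refine ⟨(j, ⟨y j - x j, sub_ne_zero.mpr (Ne.symm hxj)⟩), ?_⟩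
  funext i
  by_cases hij : i = j
  · subst hij; simp [Function.update_self]
  · simp [Function.update_of_ne hij, hother i hij]

lemma ncard_neighbors_le (x : Fin n → F) :
    {y : Fin n → F | hammingDist x y = 1}.ncard ≤ (Fintype.card F - 1) * n := by
  have h1 := Set.ncard_le_ncard (neighbors_subset_range x) (Set.toFinite _)
  refine h1.trans ?_
  rw [← Nat.card_coe_set_eq]
  refine (Finite.card_range_le _).trans ?_
  rw [Nat.card_eq_fintype_card, Fintype.card_prod, Fintype.card_fin]
  have : Fintype.card {v : F // v ≠ 0} = Fintype.card F - 1 := by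
    rw [Fintype.card_subtype_compl, Fintype.card_subtype_eq]
  rw [this, Nat.mul_comm]

end CRHelp

namespace CRHelp
set_option linter.unusedSectionVars false
variable {n u : ℕ}

lemma hin_forward (C : Set (Fin n → F)) (hC : C.Nonempty) (b c : ℕ → ℕ)
    (h : HasIntersectionNumbers C b c) : HasIntersectionNumbers (appendCode u C) b c := by
  intro l z hz
  rw [distToCode_append C hC] at hz
  obtain ⟨hb, hcc⟩ := h l (leftPart z) hz
  constructor
  · have e := neighbor_card_eq C hC z (fun d => d = l + 1) (by rw [hz]; omega)
    exact e.trans hb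
  · have e := neighbor_card_eq C hC z (fun d => d + 1 = l) (by rw [hz]; omega)
    exact e.trans hcc

lemma count_transfer (C : Set (Fin n → F)) (hC : C.Nonempty) (x : Fin n → F) (l : ℕ)
    (hx : distToCode C x = l) (hu : True) :
    (Nat.card {y : Fin (n + u) → F | hammingDist (Fin.append x (0 : Fin u → F)) y = 1 ∧
        distToCode (appendCode u C) y = l + 1} =
      Nat.card {w : Fin n → F | hammingDist x w = 1 ∧ distToCode C w = l + 1}) ∧
    (Nat.card {y : Fin (n + u) → F | hammingDist (Fin.append x (0 : Fin u → F)) y = 1 ∧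
        distToCode (appendCode u C) y + 1 = l} =
      Nat.card {w : Fin n → F | hammingDist x w = 1 ∧ distToCode C w + 1 = l}) := by
  have hL : leftPart (Fin.append x (0 : Fin u → F)) = x := leftPart_append x 0
  constructor
  · have e := neighbor_card_eq C hC (Fin.append x (0 : Fin u → F)) (fun d => d = l + 1)
      (by rw [hL, hx]; omega)
    rw [hL] at e
    exact e
  · have e := neighbor_card_eq C hC (Fin.append x (0 : Fin u → F)) (fun d => d + 1 = l)
      (by rw [hL, hx]; omega)
    rw [hL] at e
    exact e

lemma dist_append_zero (C : Set (Fin n → F)) (hC : C.Nonempty) (x : Fin n → F) :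
    distToCode (appendCode u C) (Fin.append x (0 : Fin u → F)) = distToCode C x := by
  rw [distToCode_append C hC, leftPart_append]

lemma hin_backward (C : Set (Fin n → F)) (hC : C.Nonempty) (b c : ℕ → ℕ)
    (h : HasIntersectionNumbers (appendCode u C) b c) : HasIntersectionNumbers C b c := by
  intro l x hx
  have hz : distToCode (appendCode u C) (Fin.append x (0 : Fin u → F)) = l := by
    rw [dist_append_zero C hC]; exact hx
  obtain ⟨hb, hcc⟩ := h l _ hz
  obtain ⟨e1, e2⟩ := count_transfer (u := u) C hC x l hx trivial
  exact ⟨e1.symm.trans hb, e2.symm.trans hcc⟩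

lemma exists_dist_of_le (C : Set (Fin n → F)) (hC : C.Nonempty) (i : ℕ)
    (hi : i ≤ coveringRadius C) : ∃ x : Fin n → F, distToCode C x = i := by
  have hbdd : BddAbove {d : ℕ | ∃ x : Fin n → F, distToCode C x = d} := by
    refine ⟨n, ?_⟩
    rintro d ⟨x, rfl⟩
    obtain ⟨c0, hc0⟩ := hC
    calc distToCode C x ≤ hammingDist x c0 := distToCode_le C hc0 x
      _ ≤ Fintype.card (Fin n) := hammingDist_le_card_fintype
      _ = n := Fintype.card_fin n
  have hne : {d : ℕ | ∃ x : Fin n → F, distToCode C x = d}.Nonempty := ⟨_, 0, rfl⟩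
  obtain ⟨x0, hx0⟩ := Nat.sSup_mem hne hbdd
  exact exists_dist_le C hC x0 i (by rw [hx0]; exact hi)

lemma bc_bound (C : Set (Fin n → F)) (i : ℕ) (x : Fin n → F) :
    Nat.card {y : Fin n → F | hammingDist x y = 1 ∧ distToCode C y = i + 1} +
      Nat.card {y : Fin n → F | hammingDist x y = 1 ∧ distToCode C y + 1 = i} ≤
      (Fintype.card F - 1) * n := by
  set S₁ := {y : Fin n → F | hammingDist x y = 1 ∧ distToCode C y = i + 1}
  set S₂ := {y : Fin n → F | hammingDist x y = 1 ∧ distToCode C y + 1 = i}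
  have hdisj : Disjoint S₁ S₂ := by
    rw [Set.disjoint_left]
    rintro y ⟨_, h1⟩ ⟨_, h2⟩
    omega
  have hsub : S₁ ∪ S₂ ⊆ {y : Fin n → F | hammingDist x y = 1} := by
    rintro y (⟨h, _⟩ | ⟨h, _⟩) <;> exact h
  calc Nat.card S₁ + Nat.card S₂ = S₁.ncard + S₂.ncard := by
        rw [Nat.card_coe_set_eq, Nat.card_coe_set_eq]
    _ = (S₁ ∪ S₂).ncard := (Set.ncard_union_eq hdisj (Set.toFinite _) (Set.toFinite _)).symm
    _ ≤ {y : Fin n → F | hammingDist x y = 1}.ncard :=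
        Set.ncard_le_ncard hsub (Set.toFinite _)
    _ ≤ (Fintype.card F - 1) * n := ncard_neighbors_le x

end CRHelp

/-- `C` is completely regular iff `C⁺ᵘ` is, and in this case they have the same
intersection numbers `b_i, c_i` (for `i ≤ ρ`), while `a'_i = a_i + (q-1)u`. -/
theorem construction_I_completely_regular
    {F : Type*} [Field F] [Fintype F] [DecidableEq F] {n u : ℕ} (hu : 1 ≤ u)
    (C : Submodule F (Fin n → F)) :
    (IsCompletelyRegular (C : Set (Fin n → F)) ↔
        IsCompletelyRegular (appendCode u (C : Set (Fin n → F)))) ∧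
    (∀ b c b' c' : ℕ → ℕ,
      HasIntersectionNumbers (C : Set (Fin n → F)) b c →
      HasIntersectionNumbers (appendCode u (C : Set (Fin n → F))) b' c' →
      ∀ i ≤ coveringRadius (C : Set (Fin n → F)),
        b' i = b i ∧ c' i = c i ∧
        (Fintype.card F - 1) * (n + u) - b' i - c' i =
          ((Fintype.card F - 1) * n - b i - c i) + (Fintype.card F - 1) * u) := by
  have hC : (C : Set (Fin n → F)).Nonempty := ⟨0, Submodule.zero_mem C⟩
  constructor
  · constructor
    · rintro ⟨b, c, h⟩
      exact ⟨b, c, CRHelp.hin_forward _ hC b c h⟩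
    · rintro ⟨b, c, h⟩
      exact ⟨b, c, CRHelp.hin_backward _ hC b c h⟩
  · intro b c b' c' hbc hbc' i hi
    obtain ⟨x, hx⟩ := CRHelp.exists_dist_of_le _ hC i hi
    obtain ⟨hb1, hc1⟩ := hbc i x hx
    have hz : distToCode (appendCode u (C : Set (Fin n → F))) (Fin.append x (0 : Fin u → F)) = i :=
      by rw [CRHelp.dist_append_zero _ hC]; exact hx
    obtain ⟨hb2, hc2⟩ := hbc' i _ hz
    obtain ⟨e1, e2⟩ := CRHelp.count_transfer (u := u) _ hC x i hx trivial
    have hbeq : b' i = b i := by rw [← hb2, e1, hb1]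
    have hceq : c' i = c i := by rw [← hc2, e2, hc1]
    refine ⟨hbeq, hceq, ?_⟩
    have hbound := CRHelp.bc_bound (C : Set (Fin n → F)) i x
    rw [hb1, hc1] at hbound
    have hmul : (Fintype.card F - 1) * (n + u) =
        (Fintype.card F - 1) * n + (Fintype.card F - 1) * u := Nat.mul_add _ _ _
    rw [hbeq, hceq]
    omega
end

section
/- Let C be a linear [n,k,d]_q code, ℓ ≥ 1 an integer, λ_1, …, λ_ℓ nonzero elements of 𝔽_q, and C^{×ℓ} = {(x_1|⋯|x_ℓ) ∈ 𝔽_q^{nℓ} : x_i ∈ 𝔽_q^n, λ_1x_1 + ⋯ + λ_ℓx_ℓ ∈ C}. Then C is completely regular with covering radius ρ = 1 if and only if C^{×ℓ} is completely regular with covering radius ρ' = 1. -/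
open Finset

variable {F : Type*} [Field F] [Fintype F] [DecidableEq F]

/-!
Let `s : 𝔽_q^{ℓ × n} → 𝔽_q^n`, `s z = ∑ᵢ λᵢ zᵢ`, so that `C^{×ℓ} = s⁻¹ C`. The map `s` does not
increase Hamming distance, and any target `w` is reached from `z` by changing only the block `i₀`
in the positions where `s z` and `w` differ; hence `d(z, C^{×ℓ}) = d(s z, C)` and both codes have
the same covering radius. Changing the coordinate `(i, j)` of `z` changes `s z` only in position
`j`, through the affine bijection `v ↦ s z j + λᵢ (v - z (i, j))` of values, so every neighbour of
`s z` has exactly `ℓ` neighbours of `z` above it. Thus the intersection numbers of `C^{×ℓ}` are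
`ℓ` times those of `C`.
-/

open Function

section HammingNeighbours

variable {ι β : Type*} [Fintype ι] [DecidableEq ι] [DecidableEq β]

theorem hammingDist_update_self {x : ι → β} {k : ι} {v : β} (hv : v ≠ x k) :
    hammingDist x (update x k v) = 1 := by
  rw [hammingDist, Finset.card_eq_one]
  refine ⟨k, Finset.ext fun i => ?_⟩
  by_cases hi : i = k
  · subst hi; simpa using hv.symm
  · simp [hi]

theorem exists_eq_update_of_hammingDist_eq_one {x y : ι → β} (h : hammingDist x y = 1) :
    ∃ k v, v ≠ x k ∧ y = update x k v := by
  rw [hammingDist, Finset.card_eq_one] at h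
  obtain ⟨k, hk⟩ := h
  have hmem : ∀ i, x i ≠ y i ↔ i = k := fun i => by
    simpa using Finset.ext_iff.mp hk i
  refine ⟨k, y k, fun h => (hmem k).mpr rfl h.symm, funext fun i => ?_⟩
  by_cases hi : i = k
  · subst hi; simp
  · simpa [hi, eq_comm] using mt (hmem i).mp hi

theorem card_hammingNeighbours_eq_sum [Finite β] (x : ι → β) (R : (ι → β) → Prop) :
    Nat.card {y : ι → β | hammingDist x y = 1 ∧ R y} =
      ∑ k, Nat.card {v : β | v ≠ x k ∧ R (update x k v)} := by
  rw [← Nat.card_sigma]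
  refine (Nat.card_congr (Equiv.ofBijective
    (fun p => ⟨update x p.1 p.2, hammingDist_update_self p.2.2.1, p.2.2.2⟩) ⟨?_, ?_⟩)).symm
  · rintro ⟨k, v, hv, _⟩ ⟨k', v', _, _⟩ h
    have hx := congrFun (Subtype.ext_iff.mp h) k
    obtain rfl : k = k' := by
      by_contra hk
      exact hv (by simpa [update_of_ne hk] using hx)
    simp_all
  · rintro ⟨y, hy, hR⟩
    obtain ⟨k, v, hv, rfl⟩ := exists_eq_update_of_hammingDist_eq_one hy
    exact ⟨⟨k, v, hv, hR⟩, rfl⟩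

end HammingNeighbours

theorem Nat.sInf_eq_of_forall_exists_le {S T : Set ℕ} (hST : ∀ a ∈ S, ∃ b ∈ T, b ≤ a)
    (hTS : ∀ b ∈ T, ∃ a ∈ S, a ≤ b) : sInf S = sInf T := by
  have key : ∀ {S T : Set ℕ}, T.Nonempty → (∀ b ∈ T, ∃ a ∈ S, a ≤ b) → sInf S ≤ sInf T :=
    fun hT hTS => by
      obtain ⟨a, ha, hle⟩ := hTS _ (Nat.sInf_mem hT)
      exact (Nat.sInf_le ha).trans hle
  rcases S.eq_empty_or_nonempty with rfl | hS
  · obtain rfl : T = ∅ := Set.eq_empty_of_forall_notMem fun b hb => by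
      simpa using hTS b hb
    rfl
  · have hT : T.Nonempty := let ⟨a, ha⟩ := hS; let ⟨b, hb, _⟩ := hST a ha; ⟨b, hb⟩
    exact le_antisymm (key hT hTS) (key hS hST)

section Preimage

variable {ι κ β : Type*} [Fintype ι] [Fintype κ] [DecidableEq β] {f : (ι → β) → (κ → β)}

theorem distToCode_preimage (C : Set (κ → β))
    (hf : ∀ x y, hammingDist (f x) (f y) ≤ hammingDist x y)
    (hlift : ∀ x w, ∃ y, f y = w ∧ hammingDist x y ≤ hammingDist (f x) w) (x : ι → β) :
    distToCode (f ⁻¹' C) x = distToCode C (f x) := by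
  refine Nat.sInf_eq_of_forall_exists_le ?_ ?_
  · rintro _ ⟨y, hy, rfl⟩
    exact ⟨_, ⟨f y, hy, rfl⟩, hf x y⟩
  · rintro _ ⟨c, hc, rfl⟩
    obtain ⟨y, rfl, hy⟩ := hlift x c
    exact ⟨_, ⟨y, hc, rfl⟩, hy⟩

theorem coveringRadius_preimage {C : Set (κ → β)} (hf : Surjective f)
    (hdist : ∀ x, distToCode (f ⁻¹' C) x = distToCode C (f x)) :
    coveringRadius (f ⁻¹' C) = coveringRadius C := by
  have : Set.range (distToCode (f ⁻¹' C)) = Set.range (distToCode C) := by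
    rw [funext hdist, Set.range_comp', hf.range_eq, Set.image_univ]
  exact congrArg sSup this

theorem isCompletelyRegular_preimage_iff {C : Set (κ → β)} (hf : Surjective f) {m : ℕ}
    (hm : 0 < m) (hdist : ∀ x, distToCode (f ⁻¹' C) x = distToCode C (f x))
    (hcard : ∀ x (Q : (κ → β) → Prop), Nat.card {y | hammingDist x y = 1 ∧ Q (f y)} =
      m * Nat.card {w | hammingDist (f x) w = 1 ∧ Q w}) :
    IsCompletelyRegular (f ⁻¹' C) ↔ IsCompletelyRegular C := by
  have hcount : ∀ x (P : ℕ → Prop),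
      Nat.card {y | hammingDist x y = 1 ∧ P (distToCode (f ⁻¹' C) y)} =
        m * Nat.card {w | hammingDist (f x) w = 1 ∧ P (distToCode C w)} := fun x P => by
    simp_rw [hdist]; exact hcard x (P ∘ distToCode C)
  constructor
  · rintro ⟨b, c, h⟩
    refine ⟨fun l => b l / m, fun l => c l / m, fun l x hx => ?_⟩
    obtain ⟨z, rfl⟩ := hf x
    obtain ⟨hb, hc⟩ := h l z ((hdist z).trans hx)
    rw [hcount z (· = l + 1)] at hb
    rw [hcount z (· + 1 = l)] at hc
    exact ⟨by simp only [← hb, Nat.mul_div_cancel_left _ hm],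
      by simp only [← hc, Nat.mul_div_cancel_left _ hm]⟩
  · rintro ⟨b, c, h⟩
    refine ⟨fun l => m * b l, fun l => m * c l, fun l x hx => ?_⟩
    obtain ⟨hb, hc⟩ := h l (f x) ((hdist x).symm.trans hx)
    exact ⟨by rw [hcount x (· = l + 1), hb], by rw [hcount x (· + 1 = l), hc]⟩

end Preimage

section BlockSum

variable {κ ι R : Type*} [Fintype κ] [Ring R] (lam : κ → Rˣ)

def blockSum : (κ × ι → R) →+ (ι → R) where
  toFun z j := ∑ i, (lam i : R) * z (i, j)
  map_zero' := by ext; simp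
  map_add' z w := by ext j; simp [mul_add, Finset.sum_add_distrib]

@[simp]
theorem blockSum_apply (z : κ × ι → R) (j : ι) :
    blockSum lam z j = ∑ i, (lam i : R) * z (i, j) := rfl

theorem blockSum_single [DecidableEq κ] [DecidableEq ι] (i : κ) (j : ι) (a : R) :
    blockSum lam (Pi.single (i, j) a) = Pi.single j (lam i * a) := by
  ext j'
  by_cases hj : j' = j
  · subst hj; simp [Pi.single_apply]
  · simp [hj]

theorem blockSum_update [DecidableEq κ] [DecidableEq ι] (z : κ × ι → R) (i : κ) (j : ι) (v : R) :
    blockSum lam (update z (i, j) v) =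
      update (blockSum lam z) j (blockSum lam z j + lam i * (v - z (i, j))) := by
  rw [Pi.update_eq_sub_add_single, Pi.update_eq_sub_add_single]
  simp only [map_add, map_sub, blockSum_single, mul_sub, Pi.single_add, Pi.single_sub]
  abel

theorem hammingDist_blockSum_le [Fintype ι] [DecidableEq R] (z y : κ × ι → R) :
    hammingDist (blockSum lam z) (blockSum lam y) ≤ hammingDist z y := by
  classical
  refine (Finset.card_le_card fun j hj => ?_).trans
    (Finset.card_image_le (f := Prod.snd) (s := Finset.univ.filter fun p => z p ≠ y p))
  contrapose! hj
  simp only [Finset.mem_filter, Finset.mem_univ, true_and, Finset.mem_image, Prod.exists,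
    exists_eq_right, not_exists, not_not] at hj ⊢
  simp [hj]

theorem exists_blockSum_eq_hammingDist_le [Fintype ι] [DecidableEq κ] [DecidableEq R] (i₀ : κ)
    (z : κ × ι → R) (w : ι → R) :
    ∃ y, blockSum lam y = w ∧ hammingDist z y ≤ hammingDist (blockSum lam z) w := by
  classical
  let d : κ × ι → R := fun p => if p.1 = i₀ then ↑(lam i₀)⁻¹ * (w p.2 - blockSum lam z p.2) else 0
  refine ⟨z + d, ?_, ?_⟩
  · ext j
    rw [map_add, Pi.add_apply, add_comm, ← eq_sub_iff_add_eq]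
    simp [d, mul_ite]
  · refine (Finset.card_le_card fun p hp => ?_).trans (Finset.card_image_le (f := fun j => (i₀, j))
      (s := Finset.univ.filter fun j => blockSum lam z j ≠ w j))
    obtain ⟨i, j⟩ := p
    by_cases hi : i = i₀
    · subst hi
      have hj : w j ≠ blockSum lam z j := by simpa [d, sub_eq_zero] using hp
      exact Finset.mem_image_of_mem _ (Finset.mem_filter.mpr ⟨Finset.mem_univ _, hj.symm⟩)
    · simp [d, hi] at hp

theorem card_hammingNeighbours_blockSum [Fintype ι] [DecidableEq κ] [DecidableEq ι] [DecidableEq R]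
    [Finite R] (z : κ × ι → R) (Q : (ι → R) → Prop) :
    Nat.card {y | hammingDist z y = 1 ∧ Q (blockSum lam y)} =
      Fintype.card κ * Nat.card {w | hammingDist (blockSum lam z) w = 1 ∧ Q w} := by
  have hcoord : ∀ i j, Nat.card {v | v ≠ z (i, j) ∧ Q (blockSum lam (update z (i, j) v))} =
      Nat.card {w | w ≠ blockSum lam z j ∧ Q (update (blockSum lam z) j w)} := fun i j => by
    let e : R ≃ R := (Equiv.subRight (z (i, j))).trans ((lam i).mulLeft.trans
      (Equiv.addLeft (blockSum lam z j)))
    refine Nat.card_congr (e.subtypeEquiv fun v => ?_)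
    simp [e, blockSum_update, sub_eq_zero]
  rw [card_hammingNeighbours_eq_sum, card_hammingNeighbours_eq_sum, Fintype.sum_prod_type,
    Finset.sum_comm]
  simp [hcoord, Finset.mul_sum]

end BlockSum

section BlockSumPreimage

variable {κ ι R : Type*} [Fintype κ] [Nonempty κ] [DecidableEq κ] [Fintype ι] [Ring R]
  [DecidableEq R] (lam : κ → Rˣ) (C : Set (ι → R))

theorem distToCode_preimage_blockSum (z : κ × ι → R) :
    distToCode (blockSum lam ⁻¹' C) z = distToCode C (blockSum lam z) :=
  distToCode_preimage C (hammingDist_blockSum_le lam)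
    (exists_blockSum_eq_hammingDist_le lam (Classical.arbitrary κ)) z

theorem blockSum_surjective : Surjective (blockSum (ι := ι) lam) := fun w =>
  let ⟨y, hy, _⟩ := exists_blockSum_eq_hammingDist_le lam (Classical.arbitrary κ) 0 w
  ⟨y, hy⟩

theorem coveringRadius_preimage_blockSum :
    coveringRadius (blockSum lam ⁻¹' C) = coveringRadius C :=
  coveringRadius_preimage (blockSum_surjective lam) (distToCode_preimage_blockSum lam C)

theorem isCompletelyRegular_preimage_blockSum_iff [DecidableEq ι] [Finite R] :
    IsCompletelyRegular (blockSum lam ⁻¹' C) ↔ IsCompletelyRegular C :=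
  isCompletelyRegular_preimage_iff (blockSum_surjective lam) Fintype.card_pos
    (distToCode_preimage_blockSum lam C) (card_hammingNeighbours_blockSum lam)

end BlockSumPreimage

theorem repeatCode_eq_preimage_blockSum {K : Type*} [Field K] {n ℓ : ℕ} (lam : Fin ℓ → Kˣ)
    (C : Set (Fin n → K)) : repeatCode lam C = blockSum lam ⁻¹' C := rfl

/-- `C` is completely regular with covering radius 1 iff `C^{×ℓ}` is completely
regular with covering radius 1. -/
theorem construction_II_completely_regular
    {F : Type*} [Field F] [Fintype F] [DecidableEq F] {n ℓ : ℕ} (hℓ : 1 ≤ ℓ)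
    (lam : Fin ℓ → Fˣ) (C : Submodule F (Fin n → F)) :
    (IsCompletelyRegular (C : Set (Fin n → F)) ∧
        coveringRadius (C : Set (Fin n → F)) = 1) ↔
      (IsCompletelyRegular (repeatCode lam (C : Set (Fin n → F))) ∧
        coveringRadius (repeatCode lam (C : Set (Fin n → F))) = 1) := by
  have : Nonempty (Fin ℓ) := ⟨⟨0, hℓ⟩⟩
  rw [repeatCode_eq_preimage_blockSum, isCompletelyRegular_preimage_blockSum_iff,
    coveringRadius_preimage_blockSum]
end

section
/- Every nontrivial linear [n,k,d]_q code C that is completely regular with covering radius ρ = 1 is completely transitive, i.e., the action of Aut(C) on the cosets of C has exactly 2 orbits. -/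
/-! Let `V = 𝔽_qⁿ ⧸ C` and let `hⱼ = eⱼ + C` be the columns of a parity-check matrix. For
`x ∉ C` the codewords adjacent to `x` are the `x - a eⱼ` with `a hⱼ = x + C`, so with covering
radius one, complete regularity says exactly that every projective point of `V` is the class of
the same number `c₁` of columns. Given `u, w ∉ C`, pick `B ∈ GL(V)` with `B (u + C) = w + C`.
The columns `hⱼ` and `B hⱼ` then meet every projective point equally often, so there are a
permutation `τ` and scalars `γⱼ` with `B hⱼ = γⱼ h_{τ j}`. The monomial map `eⱼ ↦ γⱼ e_{τ j}`
induces `B` on `V`, hence preserves `C` and maps `u` into `w + C`: the nonzero cosets form a single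
orbit of `Aut C`. -/

open Finset

variable {F : Type*} [Field F] [Fintype F] [DecidableEq F]

open MulAction

section LineClass

variable {K V : Type*} [Field K] [AddCommGroup V] [Module K V]

variable (K) in
/-- A point of the projective space of `V`, except that `0` gets a class `{0}` of its own. -/
def lineClass (v : V) : orbitRel.Quotient Kˣ V :=
  Quotient.mk _ v

lemma lineClass_eq_iff {v w : V} : lineClass K v = lineClass K w ↔ ∃ γ : Kˣ, γ • w = v :=
  Quotient.eq.trans (orbitRel_apply.trans mem_orbit_iff)

lemma lineClass_apply_eq_iff (B : V ≃ₗ[K] V) {v w : V} :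
    lineClass K (B v) = lineClass K w ↔ lineClass K v = lineClass K (B.symm w) := by
  simp only [lineClass_eq_iff]
  refine exists_congr fun γ => ?_
  rw [Units.smul_def, Units.smul_def, ← B.symm.map_smul, B.symm_apply_eq]

lemma exists_linearEquiv_apply_eq [FiniteDimensional K V] {s t : V} (hs : s ≠ 0) (ht : t ≠ 0) :
    ∃ B : V ≃ₗ[K] V, B s = t := by
  obtain ⟨B, hB⟩ := Submodule.exists_linearEquiv_restrict_eq
    ((LinearEquiv.toSpanNonzeroSingleton K V s hs).symm ≪≫ₗ
      LinearEquiv.toSpanNonzeroSingleton K V t ht)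
  have h1 := hB (LinearEquiv.toSpanNonzeroSingleton K V s hs 1)
  rw [LinearEquiv.trans_apply, LinearEquiv.symm_apply_apply] at h1
  exact ⟨B, by simpa using h1.symm⟩

end LineClass

lemma exists_perm_comp_eq_of_card_fiber_eq {α β : Type*} [Finite α] {f g : α → β}
    (h : ∀ b, Nat.card {a // f a = b} = Nat.card {a // g a = b}) :
    ∃ τ : Equiv.Perm α, ∀ a, g (τ a) = f a :=
  ⟨Equiv.ofFiberEquiv fun b => (Finite.card_eq.mp (h b)).some, Equiv.ofFiberEquiv_map _⟩

section DistToCode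

variable {β ι : Type*} [DecidableEq β] [Fintype ι] {C : Set (ι → β)}

lemma distToCode_le_hammingDist (x : ι → β) {c : ι → β} (hc : c ∈ C) :
    distToCode C x ≤ hammingDist x c :=
  Nat.sInf_le ⟨c, hc, rfl⟩

lemma distToCode_eq_zero_iff (hC : C.Nonempty) {x : ι → β} : distToCode C x = 0 ↔ x ∈ C := by
  refine ⟨fun h => ?_, fun hx => by simpa using distToCode_le_hammingDist x hx⟩
  obtain ⟨c, hc⟩ := hC
  obtain ⟨c', hc', hxc'⟩ := Nat.sInf_mem (s := {d | ∃ c ∈ C, hammingDist x c = d}) ⟨_, c, hc, rfl⟩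
  rw [← distToCode, h, hammingDist_eq_zero] at hxc'
  exact hxc' ▸ hc'

lemma bddAbove_range_distToCode (hC : C.Nonempty) : BddAbove (Set.range (distToCode C)) := by
  obtain ⟨c, hc⟩ := hC
  exact ⟨Fintype.card ι, Set.forall_mem_range.mpr fun x =>
    (distToCode_le_hammingDist x hc).trans hammingDist_le_card_fintype⟩

lemma distToCode_le_coveringRadius (hC : C.Nonempty) (x : ι → β) :
    distToCode C x ≤ coveringRadius C :=
  le_csSup (bddAbove_range_distToCode hC) ⟨x, rfl⟩

lemma exists_distToCode_eq_coveringRadius (hC : C.Nonempty) :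
    ∃ x, distToCode C x = coveringRadius C := by
  obtain ⟨c, hc⟩ := hC
  exact Nat.sSup_mem (s := Set.range (distToCode C)) ⟨_, c, rfl⟩ (bddAbove_range_distToCode ⟨c, hc⟩)

lemma distToCode_eq_one_of_notMem (hC : C.Nonempty) (hρ : coveringRadius C = 1) {x : ι → β}
    (hx : x ∉ C) : distToCode C x = 1 := by
  have := distToCode_le_coveringRadius hC x
  have := (distToCode_eq_zero_iff hC).not.mpr hx
  omega

end DistToCode

section Hamming

variable {β ι : Type*} [Zero β] [DecidableEq β] [Fintype ι] [DecidableEq ι]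

lemma hammingNorm_single {a : β} (ha : a ≠ 0) (i : ι) :
    hammingNorm (Pi.single i a : ι → β) = 1 := by
  simp [hammingNorm, Pi.single_apply, ha, Finset.filter_eq']

lemma exists_eq_single_of_hammingNorm_eq_one {v : ι → β} (h : hammingNorm v = 1) :
    ∃ i, ∃ a ≠ 0, v = Pi.single i a := by
  obtain ⟨i, hi⟩ := Finset.card_eq_one.mp h
  have hsupp : ∀ j, v j ≠ 0 ↔ j = i := fun j => by simpa using Finset.ext_iff.mp hi j
  refine ⟨i, v i, (hsupp i).mpr rfl, funext fun j => ?_⟩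
  by_cases hj : j = i
  · subst hj
    simp
  · rw [Pi.single_eq_of_ne hj]
    exact not_not.mp (mt (hsupp j).mp hj)

variable {K : Type*} [Field K] [DecidableEq K]

noncomputable def hammingSphereOneEquiv (x : ι → K) :
    ι × Kˣ ≃ {y : ι → K // hammingDist x y = 1} :=
  Equiv.ofBijective
    (fun p => ⟨x - Pi.single p.1 (p.2 : K), by
      rw [hammingDist_comm, hammingDist_eq_hammingNorm, neg_add_eq_sub, sub_sub_cancel,
        hammingNorm_single p.2.ne_zero]⟩)
    ⟨by
      rintro ⟨i, a⟩ ⟨j, b⟩ h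
      have hab := sub_right_injective (congrArg Subtype.val h)
      obtain rfl : i = j := by
        by_contra hij
        simpa [Pi.single_apply, hij] using congrFun hab i
      simpa [Units.ext_iff] using Pi.single_injective i hab,
    by
      rintro ⟨y, hy⟩
      rw [hammingDist_comm, hammingDist_eq_hammingNorm, neg_add_eq_sub] at hy
      obtain ⟨i, a, ha, hxy⟩ := exists_eq_single_of_hammingNorm_eq_one hy
      exact ⟨⟨i, Units.mk0 a ha⟩, Subtype.ext (by simp [← hxy])⟩⟩

end Hamming

section Monomial

variable {K ι : Type*} [Field K]

lemma isMonomialMap_id : IsMonomialMap (id : (ι → K) → (ι → K)) :=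
  ⟨1, 1, fun _ _ => by simp⟩

lemma IsMonomialMap.injective {φ : (ι → K) → (ι → K)} (hφ : IsMonomialMap φ) :
    Function.Injective φ := by
  obtain ⟨π, s, hφ⟩ := hφ
  intro x y h
  funext k
  have hk := congrFun h (π.symm k)
  rw [hφ, hφ, π.apply_symm_apply] at hk
  exact mul_left_cancel₀ (s _).ne_zero hk

def monomialMap (π : Equiv.Perm ι) (s : ι → Kˣ) : (ι → K) →ₗ[K] (ι → K) :=
  LinearMap.pi fun i => (s i : K) • LinearMap.proj (π i)

lemma monomialMap_apply (π : Equiv.Perm ι) (s : ι → Kˣ) (x : ι → K) (i : ι) :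
    monomialMap π s x i = s i * x (π i) :=
  rfl

lemma isMonomialMap_monomialMap (π : Equiv.Perm ι) (s : ι → Kˣ) :
    IsMonomialMap (monomialMap π s) :=
  ⟨π, s, monomialMap_apply π s⟩

lemma monomialMap_single [DecidableEq ι] (π : Equiv.Perm ι) (s : ι → Kˣ) (j : ι) (a : K) :
    monomialMap π s (Pi.single j a) = Pi.single (π.symm j) (s (π.symm j) * a) := by
  funext i
  rw [monomialMap_apply]
  by_cases hi : i = π.symm j
  · subst hi
    simp
  · rw [Pi.single_eq_of_ne hi, Pi.single_eq_of_ne (by rwa [π.eq_symm_apply] at hi), mul_zero]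

end Monomial

section SyndromeColumn

variable {K ι : Type*} [Field K] [DecidableEq ι] (C : Submodule K (ι → K))

/-- `C.mkQ` plays the role of the syndrome map of `C`, so this is the `j`-th column of a
parity-check matrix. -/
def syndromeColumn (j : ι) : (ι → K) ⧸ C :=
  C.mkQ (Pi.single j 1)

lemma mkQ_single (j : ι) (a : K) : C.mkQ (Pi.single j a) = a • syndromeColumn C j := by
  rw [syndromeColumn, ← map_smul, ← Pi.single_smul', smul_eq_mul, mul_one]

lemma sub_single_mem_iff {x : ι → K} {j : ι} {a : K} :
    x - Pi.single j a ∈ C ↔ a • syndromeColumn C j = C.mkQ x := by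
  rw [← Submodule.Quotient.mk_eq_zero, ← Submodule.mkQ_apply, map_sub, mkQ_single, sub_eq_zero,
    eq_comm]

variable [Fintype ι]

lemma exists_monomialMap_mkQ_eq (B : ((ι → K) ⧸ C) ≃ₗ[K] ((ι → K) ⧸ C))
    (hB : ∀ O, Nat.card {j // lineClass K (B (syndromeColumn C j)) = O} =
      Nat.card {j // lineClass K (syndromeColumn C j) = O}) :
    ∃ (π : Equiv.Perm ι) (s : ι → Kˣ), ∀ x, C.mkQ (monomialMap π s x) = B (C.mkQ x) := by
  obtain ⟨τ, hτ⟩ := exists_perm_comp_eq_of_card_fiber_eq hB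
  choose γ hγ using fun j => lineClass_eq_iff.mp (hτ j).symm
  refine ⟨τ.symm, fun i => γ (τ.symm i), fun x => LinearMap.congr_fun (f := C.mkQ ∘ₗ _)
    (g := (B : ((ι → K) ⧸ C) →ₗ[K] _) ∘ₗ C.mkQ) ((Pi.basisFun K ι).ext fun j => ?_) x⟩
  simp only [Pi.basisFun_apply, LinearMap.comp_apply, monomialMap_single, Equiv.symm_symm,
    Equiv.symm_apply_apply, mul_one, mkQ_single, one_smul]
  exact hγ j

variable [DecidableEq K]

lemma card_neighbours_mem_eq_card_fiber {x : ι → K} (hx : x ∉ C) :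
    Nat.card {y // hammingDist x y = 1 ∧ y ∈ C} =
      Nat.card {j // lineClass K (syndromeColumn C j) = lineClass K (C.mkQ x)} := by
  have hx0 : C.mkQ x ≠ 0 := by simpa [Submodule.Quotient.mk_eq_zero] using hx
  calc Nat.card {y // hammingDist x y = 1 ∧ y ∈ C}
      = Nat.card {p : ι × Kˣ // x - Pi.single p.1 (p.2 : K) ∈ C} :=
        Nat.card_congr (((hammingSphereOneEquiv x).subtypeEquiv fun _ => Iff.rfl).trans
          (Equiv.subtypeSubtypeEquivSubtypeInter _ _)).symm
    _ = Nat.card {j // lineClass K (syndromeColumn C j) = lineClass K (C.mkQ x)} := by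
      refine Nat.card_eq_of_bijective (fun p => ⟨p.1.1,
        (lineClass_eq_iff.mpr ⟨p.1.2, (sub_single_mem_iff C).mp p.2⟩).symm⟩) ⟨?_, ?_⟩
      · rintro ⟨⟨i, a⟩, ha⟩ ⟨⟨j, b⟩, hb⟩ h
        obtain rfl : i = j := congrArg Subtype.val h
        rw [sub_single_mem_iff] at ha hb
        have hq : syndromeColumn C i ≠ 0 := fun hq => hx0 (by rw [← ha, hq, smul_zero])
        obtain rfl : a = b := Units.ext (smul_left_injective K hq (ha.trans hb.symm))
        rfl
      · rintro ⟨j, hj⟩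
        obtain ⟨γ, hγ⟩ := lineClass_eq_iff.mp hj.symm
        exact ⟨⟨(j, γ), (sub_single_mem_iff C).mpr hγ⟩, rfl⟩

end SyndromeColumn

section CompletelyRegular

variable {K ι : Type*} [Field K] [DecidableEq K] [Fintype ι] [DecidableEq ι]
  {C : Submodule K (ι → K)}

lemma card_fiber_syndromeColumn_eq {b c : ℕ → ℕ}
    (hbc : HasIntersectionNumbers (C : Set (ι → K)) b c) (hρ : coveringRadius (C : Set (ι → K)) = 1)
    {s : (ι → K) ⧸ C} (hs : s ≠ 0) :
    Nat.card {j // lineClass K (syndromeColumn C j) = lineClass K s} = c 1 := by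
  obtain ⟨x, rfl⟩ := C.mkQ_surjective s
  have hC : (C : Set (ι → K)).Nonempty := ⟨0, C.zero_mem⟩
  have hx : x ∉ C := by simpa [Submodule.Quotient.mk_eq_zero] using hs
  rw [← card_neighbours_mem_eq_card_fiber C hx,
    ← (hbc 1 x (distToCode_eq_one_of_notMem hC hρ hx)).2]
  refine Nat.card_congr (Equiv.subtypeEquivRight fun y => ?_)
  simp [distToCode_eq_zero_iff hC]

lemma card_fiber_syndromeColumn_linearEquiv {b c : ℕ → ℕ}
    (hbc : HasIntersectionNumbers (C : Set (ι → K)) b c) (hρ : coveringRadius (C : Set (ι → K)) = 1)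
    (B : ((ι → K) ⧸ C) ≃ₗ[K] ((ι → K) ⧸ C)) (O : orbitRel.Quotient Kˣ ((ι → K) ⧸ C)) :
    Nat.card {j // lineClass K (B (syndromeColumn C j)) = O} =
      Nat.card {j // lineClass K (syndromeColumn C j) = O} := by
  induction O using Quotient.inductionOn with | h s => ?_
  change Nat.card {j // lineClass K (B (syndromeColumn C j)) = lineClass K s} =
    Nat.card {j // lineClass K (syndromeColumn C j) = lineClass K s}
  rw [Nat.card_congr (Equiv.subtypeEquivRight fun j => lineClass_apply_eq_iff B)]
  by_cases hs : s = 0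
  · rw [hs, map_zero]
  · rw [card_fiber_syndromeColumn_eq hbc hρ hs,
      card_fiber_syndromeColumn_eq hbc hρ (B.symm.map_ne_zero_iff.mpr hs)]

theorem compl_subset_cosetOrbit (hcr : IsCompletelyRegular (C : Set (ι → K)))
    (hρ : coveringRadius (C : Set (ι → K)) = 1) {u : ι → K} (hu : u ∉ C) :
    (C : Set (ι → K))ᶜ ⊆ cosetOrbit C u := by
  intro w hw
  obtain ⟨b, c, hbc⟩ := hcr
  have mkQ_ne_zero {x : ι → K} (hx : x ∉ C) : C.mkQ x ≠ 0 := by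
    simpa [Submodule.Quotient.mk_eq_zero] using hx
  obtain ⟨B, hB⟩ := exists_linearEquiv_apply_eq (K := K) (mkQ_ne_zero hu) (mkQ_ne_zero hw)
  obtain ⟨π, s, hφ⟩ :=
    exists_monomialMap_mkQ_eq C B (card_fiber_syndromeColumn_linearEquiv hbc hρ B)
  have hmem (x : ι → K) : monomialMap π s x ∈ C ↔ x ∈ C := by
    rw [← Submodule.Quotient.mk_eq_zero, ← Submodule.Quotient.mk_eq_zero, ← Submodule.mkQ_apply,
      ← Submodule.mkQ_apply, hφ, B.map_eq_zero_iff]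
  refine ⟨monomialMap π s, isMonomialMap_monomialMap π s, ?_, ?_⟩
  · have hsurj := LinearMap.injective_iff_surjective.mp (isMonomialMap_monomialMap π s).injective
    calc monomialMap π s '' C = monomialMap π s '' (monomialMap π s ⁻¹' C) := by
          congr 1
          exact Set.ext fun x => (hmem x).symm
      _ = C := Set.image_preimage_eq _ hsurj
  · rw [← Submodule.Quotient.mk_eq_zero, ← Submodule.mkQ_apply, map_sub, hφ, hB, sub_self]

end CompletelyRegular

section CosetOrbit

variable {K ι : Type*} [Field K] (C : Submodule K (ι → K))

lemma cosetOrbit_of_mem {v : ι → K} (hv : v ∈ C) : cosetOrbit C v = C := by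
  ext w
  constructor
  · rintro ⟨φ, -, hφC, hvw⟩
    have hφv : φ v ∈ (C : Set (ι → K)) := hφC ▸ Set.mem_image_of_mem φ hv
    simpa using C.sub_mem hφv hvw
  · exact fun hw => ⟨id, isMonomialMap_id, Set.image_id _, C.sub_mem hv hw⟩

lemma cosetOrbit_subset_compl {v : ι → K} (hv : v ∉ C) : cosetOrbit C v ⊆ (C : Set (ι → K))ᶜ := by
  rintro w ⟨φ, hφ, hφC, hvw⟩ hw
  have hφv : φ v ∈ φ '' C := hφC.symm ▸ (by simpa using C.add_mem hvw hw)
  exact hv (hφ.injective.mem_set_image.mp hφv)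

lemma numCosetOrbits_eq_two (hC : C ≠ ⊤)
    (htrans : ∀ v ∉ C, (C : Set (ι → K))ᶜ ⊆ cosetOrbit C v) :
    numCosetOrbits C = 2 := by
  obtain ⟨v, hv⟩ : ∃ v, v ∉ C := by
    by_contra! h
    exact hC (Submodule.eq_top_iff'.mpr h)
  have hrange : Set.range (cosetOrbit C) = {(C : Set (ι → K)), (C : Set (ι → K))ᶜ} := by
    ext O
    constructor
    · rintro ⟨u, rfl⟩
      by_cases hu : u ∈ C
      · exact Or.inl (cosetOrbit_of_mem C hu)
      · exact Or.inr ((cosetOrbit_subset_compl C hu).antisymm (htrans u hu))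
    · rintro (rfl | rfl)
      · exact ⟨0, cosetOrbit_of_mem C C.zero_mem⟩
      · exact ⟨v, (cosetOrbit_subset_compl C hv).antisymm (htrans v hv)⟩
  rw [numCosetOrbits, hrange, Nat.card_coe_set_eq, Set.ncard_pair]
  exact fun h => (Set.ext_iff.mp h 0).mp C.zero_mem C.zero_mem

end CosetOrbit

theorem completely_regular_rho_one_is_completely_transitive_general
    {F : Type*} [Field F] [DecidableEq F] {n : ℕ}
    (C : Submodule F (Fin n → F))
    (hcr : IsCompletelyRegular (C : Set (Fin n → F)))
    (hρ : coveringRadius (C : Set (Fin n → F)) = 1) :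
    numCosetOrbits C = 2 := by
  have hC : (C : Set (Fin n → F)).Nonempty := ⟨0, C.zero_mem⟩
  obtain ⟨v, hv⟩ := exists_distToCode_eq_coveringRadius hC
  have hvC : v ∉ C := by
    rw [← SetLike.mem_coe, ← distToCode_eq_zero_iff hC, hv, hρ]
    exact one_ne_zero
  refine numCosetOrbits_eq_two C (fun htop => hvC (htop ▸ Submodule.mem_top)) ?_
  exact fun u hu => compl_subset_cosetOrbit hcr hρ hu

/-- every nontrivial linear completely regular code with covering radius 1
is completely transitive. -/
theorem completely_regular_rho_one_is_completely_transitive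
    {F : Type*} [Field F] [Fintype F] [DecidableEq F] {n k d : ℕ}
    (C : Submodule F (Fin n → F))
    (hk : Module.finrank F C = k)
    (hd : minDist (C : Set (Fin n → F)) = d)
    (hk2 : 2 ≤ k) (hkn : k + 2 ≤ n)
    (hcr : IsCompletelyRegular (C : Set (Fin n → F)))
    (hρ : coveringRadius (C : Set (Fin n → F)) = 1) :
    numCosetOrbits C = 2 :=
  completely_regular_rho_one_is_completely_transitive_general C hcr hρ
end

section
/- Let E be an equidistant linear code over 𝔽_q of length n and dimension k ≥ 1. Then there exist integers ℓ ≥ 1 and u ≥ 0 such that n = ℓ·(q^k−1)/(q−1) + u, and E is monomially equivalent to the code generated by the k × n matrix [H_k | H_k | ⋯ | H_k | 0] obtained by concatenating ℓ copies of a parity check matrix H_k of the q-ary Hamming code of length (q^k−1)/(q−1) and appending u zero columns. -/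
open Finset

variable {F : Type*} [Field F] [Fintype F] [DecidableEq F]

/-
Let `G` be a generator matrix of `E` with columns `gⱼ ∈ F^k`; the codeword `v ᵥ* G` has weight
`#{j | v ⬝ᵥ gⱼ ≠ 0}`, which is `d` for every `v ≠ 0`. Fix `w ≠ 0` and add up the weights of the
codewords `v ᵥ* G` with `v ⬝ᵥ w = 0`: each of the `q^(k-1) - 1` nonzero ones contributes `d`,
while a column contributes `q^(k-1) - q^(k-2)` if it lies off the line `F ∙ w` and nothing
otherwise. So the number of columns on a line does not depend on the line: the nonzero columns
hit every point of `ℙ(F^k)` the same number `ℓ` of times. Sorting the columns by their point and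
rescaling each to a fixed representative of it turns `G` into `[H | ⋯ | H | 0]`, where the
columns of `H` are one representative of each point. Any two columns of `H` are independent,
while every nonzero syndrome, in particular the sum of two columns, is a multiple of a column;
this gives `ker H` minimum distance 3 and covering radius 1.
-/
open Matrix
open scoped LinearAlgebra.Projectivization

theorem Projectivization.mk_eq_iff_mem_span {K V : Type*} [Field K] [AddCommGroup V] [Module K V]
    {v : V} (hv : v ≠ 0) (p : ℙ K V) : mk K v hv = p ↔ v ∈ K ∙ p.rep := by
  conv_lhs => rw [← p.mk_rep]
  rw [mk_eq_mk_iff', Submodule.mem_span_singleton]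

theorem exists_equiv_prod_of_natCard_fiber {α β : Type*} [Finite α] (f : α → β) {ℓ : ℕ}
    (h : ∀ b, Nat.card {a // f a = b} = ℓ) : ∃ e : α ≃ Fin ℓ × β, ∀ a, (e a).2 = f a :=
  ⟨(Equiv.sigmaFiberEquiv f).symm.trans ((Equiv.sigmaEquivProdOfEquiv fun b =>
    Finite.equivFinOfCardEq (h b)).trans (Equiv.prodComm _ _)), fun _ => rfl⟩

section Codes

variable {K ι : Type*} [DecidableEq K] [Fintype ι]

theorem minDist_eq_of_le_hammingNorm [Field K] (C : Submodule K (ι → K)) {w : ℕ}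
    (hle : ∀ x ∈ C, x ≠ 0 → w ≤ hammingNorm x) (hex : ∃ x ∈ C, x ≠ 0 ∧ hammingNorm x = w) :
    minDist (C : Set (ι → K)) = w := by
  obtain ⟨x, hxC, hx0, rfl⟩ := hex
  have hmem : hammingNorm x ∈ {d | ∃ y ∈ (C : Set (ι → K)), ∃ z ∈ (C : Set (ι → K)),
      y ≠ z ∧ hammingDist y z = d} :=
    ⟨x, hxC, 0, C.zero_mem, hx0, hammingDist_zero_right x⟩
  refine le_antisymm (Nat.sInf_le hmem) (le_csInf ⟨_, hmem⟩ ?_)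
  rintro _ ⟨y, hy, z, hz, hyz, rfl⟩
  rw [hammingDist_eq_hammingNorm]
  exact hle _ (C.add_mem (C.neg_mem hy) hz) (by rwa [Ne, neg_add_eq_zero])

theorem distToCode_le {C : Set (ι → K)} (x : ι → K) {c : ι → K} (hc : c ∈ C) :
    distToCode C x ≤ hammingDist x c :=
  Nat.sInf_le ⟨c, hc, rfl⟩

theorem coveringRadius_eq_one {C : Set (ι → K)} (hcov : ∀ x, ∃ c ∈ C, hammingDist x c ≤ 1)
    (hC : C ≠ Set.univ) : coveringRadius C = 1 := by
  have hle : ∀ x, distToCode C x ≤ 1 := fun x =>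
    let ⟨_, hc, h⟩ := hcov x
    (distToCode_le x hc).trans h
  obtain ⟨x, hx⟩ := (Set.ne_univ_iff_exists_notMem C).1 hC
  have hx1 : distToCode C x = 1 := by
    refine le_antisymm (hle x) (Nat.one_le_iff_ne_zero.2 fun h0 => hx ?_)
    obtain ⟨c, hc, -⟩ := hcov x
    obtain ⟨c, hc, hxc⟩ := Nat.sInf_mem (s := {d | ∃ c ∈ C, hammingDist x c = d}) ⟨_, c, hc, rfl⟩
    rwa [hammingDist_eq_zero.1 (hxc.trans h0)]
  exact IsGreatest.csSup_eq ⟨⟨x, hx1⟩, by rintro _ ⟨y, rfl⟩; exact hle y⟩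

end Codes

theorem Submodule.exists_linearIndependent_row_range_vecMul {K ι : Type*} [Field K] [Finite ι]
    (E : Submodule K (ι → K)) {k : ℕ} (hdim : Module.finrank K E = k) :
    ∃ G : Matrix (Fin k) ι K,
      LinearIndependent K G.row ∧ (E : Set (ι → K)) = Set.range (· ᵥ* G) := by
  have := Fintype.ofFinite ι
  let b := Module.finBasisOfFinrankEq K E hdim
  refine ⟨Matrix.of fun i => (b i : ι → K), b.linearIndependent.map' E.subtype E.ker_subtype, ?_⟩
  ext x
  simp only [SetLike.mem_coe, Set.mem_range, vecMul_eq_sum]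
  constructor
  · intro hx
    refine ⟨b.repr ⟨x, hx⟩, ?_⟩
    exact (Submodule.coe_sum ..).symm.trans (congrArg Subtype.val (b.sum_repr ⟨x, hx⟩))
  · rintro ⟨v, rfl⟩
    exact E.sum_mem fun i _ => E.smul_mem _ (b i).2

theorem monomiallyEquivalent_range_vecMul {K m ι κ : Type*} [Field K] [Fintype m]
    (G : Matrix m ι K) (G' : Matrix m κ K) (e : ι ≃ κ) (s : ι → Kˣ)
    (h : ∀ j, G'.col (e j) = (s j : K) • G.col j) :
    MonomiallyEquivalent (Set.range (· ᵥ* G)) (Set.range (· ᵥ* G')) := by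
  refine ⟨e, s, ?_⟩
  rw [← Set.range_comp]
  congr 1
  funext v κ
  obtain ⟨j, rfl⟩ := e.surjective κ
  change _ = v ⬝ᵥ G'.col (e j)
  simp [h, vecMul, dotProduct_smul]
  rfl

section Counting

variable {K : Type*} [Field K] [Fintype K] [DecidableEq K] {k : ℕ}

theorem card_filter_forall_dotProduct_eq_zero {m : ℕ} {w : Fin m → Fin k → K}
    (hw : LinearIndependent K w) :
    #{v : Fin k → K | ∀ t, v ⬝ᵥ w t = 0} = Fintype.card K ^ (k - m) := by
  let A : Matrix (Fin m) (Fin k) K := Matrix.of w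
  have hrank : Module.finrank K (LinearMap.range A.mulVecLin) = m := by
    rw [← Matrix.rank, rank_eq_finrank_span_row]
    exact (finrank_span_eq_card hw).trans (Fintype.card_fin m)
  have hker := LinearMap.finrank_range_add_finrank_ker A.mulVecLin
  rw [hrank, Module.finrank_fin_fun] at hker
  have hmem : ∀ v, (∀ t, v ⬝ᵥ w t = 0) ↔ v ∈ LinearMap.ker A.mulVecLin := by
    simp [funext_iff, mulVec, A, dotProduct_comm]
  rw [← Fintype.card_subtype, Fintype.card_eq_nat_card,
    Nat.card_congr (Equiv.subtypeEquivRight hmem), Module.natCard_eq_pow_finrank (K := K),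
    Nat.card_eq_fintype_card]
  congr 1
  omega

theorem card_filter_dotProduct_eq_zero {w : Fin k → K} (hw : w ≠ 0) :
    #{v : Fin k → K | v ⬝ᵥ w = 0} = Fintype.card K ^ (k - 1) := by
  simpa using card_filter_forall_dotProduct_eq_zero
    (linearIndependent_unique_iff.2 hw : LinearIndependent K ![w])

open Classical in
theorem card_filter_dotProduct_eq_zero_and_ne_zero {w : Fin k → K} (hw : w ≠ 0) (x : Fin k → K) :
    #{v : Fin k → K | v ⬝ᵥ w = 0 ∧ v ⬝ᵥ x ≠ 0} =
      if x ∈ K ∙ w then 0 else Fintype.card K ^ (k - 1) - Fintype.card K ^ (k - 2) := by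
  split_ifs with hx
  · obtain ⟨a, rfl⟩ := Submodule.mem_span_singleton.1 hx
    simp +contextual [dotProduct_smul]
  · have hxw : LinearIndependent K ![x, w] :=
      linearIndependent_fin2.2 ⟨hw, fun a h => hx (Submodule.mem_span_singleton.2 ⟨a, h⟩)⟩
    have hboth : #{v : Fin k → K | v ⬝ᵥ w = 0 ∧ v ⬝ᵥ x = 0} = Fintype.card K ^ (k - 2) := by
      simpa [Fin.forall_fin_two, and_comm] using card_filter_forall_dotProduct_eq_zero hxw
    have hsplit := Finset.card_filter_add_card_filter_not (s := {v : Fin k → K | v ⬝ᵥ w = 0})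
      (fun v => v ⬝ᵥ x = 0)
    rw [Finset.filter_filter, Finset.filter_filter, hboth,
      card_filter_dotProduct_eq_zero hw] at hsplit
    rw [← hsplit, Nat.add_sub_cancel_left]

open Classical in
theorem card_filter_col_notMem_span_mul {ι : Type*} [Fintype ι] (G : Matrix (Fin k) ι K) {d : ℕ}
    (hd : ∀ v ≠ 0, hammingNorm (v ᵥ* G) = d) {w : Fin k → K} (hw : w ≠ 0) :
    #{j | G.col j ∉ K ∙ w} * (Fintype.card K ^ (k - 1) - Fintype.card K ^ (k - 2)) =
      d * (Fintype.card K ^ (k - 1) - 1) := by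
  set S : Finset (Fin k → K) := {v | v ⬝ᵥ w = 0}
  calc #{j | G.col j ∉ K ∙ w} * (Fintype.card K ^ (k - 1) - Fintype.card K ^ (k - 2))
      = ∑ j, #(S.bipartiteBelow (fun v j => v ⬝ᵥ G.col j ≠ 0) j) := by
        simp only [Finset.bipartiteBelow, S, Finset.filter_filter,
          card_filter_dotProduct_eq_zero_and_ne_zero hw, Finset.sum_ite, Finset.sum_const_zero,
          Finset.sum_const, smul_eq_mul, zero_add]
    _ = ∑ v ∈ S, #(Finset.univ.bipartiteAbove (fun v j => v ⬝ᵥ G.col j ≠ 0) v) :=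
        (Finset.sum_card_bipartiteAbove_eq_sum_card_bipartiteBelow _).symm
    _ = ∑ v ∈ S.erase 0, hammingNorm (v ᵥ* G) := by
        rw [Finset.sum_erase _ (by simp)]
        rfl
    _ = d * (Fintype.card K ^ (k - 1) - 1) := by
        rw [Finset.sum_congr rfl fun v hv => hd v (Finset.ne_of_mem_erase hv), Finset.sum_const,
          Finset.card_erase_of_mem (by simp [S]), card_filter_dotProduct_eq_zero hw, smul_eq_mul,
          mul_comm]

open Classical in
theorem card_filter_col_mem_span_eq {ι : Type*} [Fintype ι] (G : Matrix (Fin k) ι K) {d : ℕ}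
    (hd : ∀ v ≠ 0, hammingNorm (v ᵥ* G) = d) {w w' : Fin k → K} (hw : w ≠ 0) (hw' : w' ≠ 0) :
    #{j | G.col j ∈ K ∙ w} = #{j | G.col j ∈ K ∙ w'} := by
  rcases le_or_gt k 1 with hk | hk
  · have hk1 : k = 1 := by
      refine le_antisymm hk (Nat.one_le_iff_ne_zero.2 ?_)
      rintro rfl
      exact hw (Subsingleton.elim _ _)
    have htop : ∀ {u : Fin k → K}, u ≠ 0 → K ∙ u = ⊤ := fun hu =>
      Submodule.eq_top_of_finrank_eq <| by
        rw [finrank_span_singleton hu, Module.finrank_fin_fun, hk1]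
    rw [htop hw, htop hw']
  · have hpos : 0 < Fintype.card K ^ (k - 1) - Fintype.card K ^ (k - 2) :=
      Nat.sub_pos_of_lt (Nat.pow_lt_pow_right Fintype.one_lt_card (by omega))
    have hnot := Nat.eq_of_mul_eq_mul_right hpos ((card_filter_col_notMem_span_mul G hd hw).trans
      (card_filter_col_notMem_span_mul G hd hw').symm)
    have h := Finset.card_filter_add_card_filter_not (s := Finset.univ) (fun j => G.col j ∈ K ∙ w)
    have h' := Finset.card_filter_add_card_filter_not (s := Finset.univ) (fun j => G.col j ∈ K ∙ w')
    omega

end Counting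

section Fibration

variable {K V ι : Type*} [Field K] [AddCommGroup V] [Module K V] [Fintype ι]

open Classical in
theorem natCard_fiber_add_card_filter_eq_zero (g : ι → V) (p : ℙ K V) :
    Nat.card {j : {j // g j ≠ 0} // Projectivization.mk K (g j) j.2 = p} + #{j | g j = 0} =
      #{j | g j ∈ K ∙ p.rep} := by
  rw [Nat.card_congr (Equiv.subtypeSubtypeEquivSubtypeExists _ _), Nat.card_eq_fintype_card,
    Fintype.card_subtype, ← Finset.card_filter_add_card_filter_not (s := {j | g j ∈ K ∙ p.rep})
      (fun j => g j ≠ 0), Finset.filter_filter, Finset.filter_filter]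
  congr 2 <;> ext j
  · simp [Projectivization.mk_eq_iff_mem_span, and_comm]
  · simp +contextual

end Fibration

theorem exists_equiv_sum_col_eq_smul {K : Type*} [Field K] [Fintype K] [DecidableEq K] {k : ℕ}
    {ι ι' : Type*} [Fintype ι] (G : Matrix (Fin k) ι K) (hG : G ≠ 0) {d : ℕ}
    (hd : ∀ v ≠ 0, hammingNorm (v ᵥ* G) = d) (P : ι' ≃ ℙ K (Fin k → K)) :
    ∃ ℓ, 1 ≤ ℓ ∧ ∃ u, ∃ (e : ι ≃ (Fin ℓ × ι') ⊕ Fin u) (s : ι → Kˣ),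
      ∀ j, Sum.elim (fun x => (P x.2).rep) 0 (e j) = (s j : K) • G.col j := by
  classical
  let ψ (j : {j // G.col j ≠ 0}) : ℙ K (Fin k → K) := Projectivization.mk K (G.col j) j.2
  obtain ⟨j₀, hj₀⟩ : ∃ j, G.col j ≠ 0 := by
    by_contra! h
    exact hG (Matrix.ext fun i j => congrFun (h j) i)
  have hfib : ∀ p, Nat.card {j // ψ j = p} = Nat.card {j // ψ j = ψ ⟨j₀, hj₀⟩} := fun p => by
    have h : Nat.card {j // ψ j = p} + _ = _ := natCard_fiber_add_card_filter_eq_zero G.col p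
    have h₀ : Nat.card {j // ψ j = ψ ⟨j₀, hj₀⟩} + _ = _ :=
      natCard_fiber_add_card_filter_eq_zero G.col (ψ ⟨j₀, hj₀⟩)
    have := card_filter_col_mem_span_eq G hd p.rep_nonzero (ψ ⟨j₀, hj₀⟩).rep_nonzero
    omega
  obtain ⟨e, he⟩ := exists_equiv_prod_of_natCard_fiber ψ hfib
  have hs (j : {j // G.col j ≠ 0}) : ∃ a : Kˣ, a • G.col j = (ψ j).rep :=
    Projectivization.exists_smul_eq_mk_rep K _ j.2
  choose s hs using hs
  refine ⟨_, Nat.card_pos_iff.2 ⟨⟨⟨⟨j₀, hj₀⟩, rfl⟩⟩, inferInstance⟩, _,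
    (Equiv.sumCompl _).symm.trans
      ((e.trans ((Equiv.refl _).prodCongr P.symm)).sumCongr (Finite.equivFin _)),
    fun j => if h : G.col j ≠ 0 then s ⟨j, h⟩ else 1, fun j => ?_⟩
  by_cases h : G.col j ≠ 0
  · rw [Equiv.trans_apply, Equiv.sumCompl_symm_apply_of_pos (p := fun j => G.col j ≠ 0) h]
    simp [h, he, ← hs, Units.smul_def]
  · rw [Equiv.trans_apply, Equiv.sumCompl_symm_apply_of_neg (p := fun j => G.col j ≠ 0) h]
    simp [not_not.1 h]

section HammingCheckMatrix

variable {K m ι : Type*} [Field K] (P : ι ≃ ℙ K (m → K))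

noncomputable def hammingCheckMatrix : Matrix m ι K :=
  Matrix.of fun i p => (P p).rep i

@[simp]
theorem col_hammingCheckMatrix (p : ι) : (hammingCheckMatrix P).col p = (P p).rep :=
  rfl

theorem hammingCheckMatrix_mulVec [Fintype ι] (x : ι → K) :
    hammingCheckMatrix P *ᵥ x = ∑ p, x p • (P p).rep := by
  simp only [mulVec_eq_sum, op_smul_eq_smul]
  rfl

theorem exists_smul_rep_eq {s : m → K} (hs : s ≠ 0) : ∃ (p : ι) (c : Kˣ), c • (P p).rep = s := by
  obtain ⟨a, ha⟩ := Projectivization.exists_smul_eq_mk_rep K s hs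
  exact ⟨P.symm (Projectivization.mk K s hs), a⁻¹, by simp [← ha]⟩

theorem linearIndepOn_rep_pair (p p' : ι) :
    LinearIndepOn K (fun q => (P q).rep) {p, p'} := by
  have hinj : Function.Injective fun q => (P q).rep := fun q q' h => P.injective <| by
    rw [← (P q).mk_rep, ← (P q').mk_rep, Projectivization.mk_eq_mk_iff']
    exact ⟨1, by simp [h]⟩
  rw [linearIndepOn_iff_image hinj.injOn, Set.image_pair]
  exact Projectivization.linearIndepOn_pair (P p) (P p')

theorem range_hammingCheckMatrix_mulVecLin [Fintype m] [Fintype ι] :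
    LinearMap.range (hammingCheckMatrix P).mulVecLin = ⊤ := by
  classical
  refine Submodule.eq_top_iff'.2 fun s => ?_
  rcases eq_or_ne s 0 with rfl | hs
  · exact Submodule.zero_mem _
  · obtain ⟨p, c, rfl⟩ := exists_smul_rep_eq P hs
    exact ⟨Pi.single p (c : K), by simp [mulVec_single, op_smul_eq_smul, Units.smul_def]⟩

theorem finrank_ker_hammingCheckMatrix_mulVecLin [Fintype m] [Fintype ι] :
    Module.finrank K (LinearMap.ker (hammingCheckMatrix P).mulVecLin) =
      Fintype.card ι - Fintype.card m := by
  have h := LinearMap.finrank_range_add_finrank_ker (hammingCheckMatrix P).mulVecLin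
  rw [range_hammingCheckMatrix_mulVecLin, finrank_top, Module.finrank_fintype_fun_eq_card,
    Module.finrank_fintype_fun_eq_card] at h
  omega

end HammingCheckMatrix

section HammingWeights

variable {K m ι : Type*} [Field K] [DecidableEq K] [Fintype ι] (P : ι ≃ ℙ K (m → K))

theorem three_le_hammingNorm_of_mulVec_eq_zero {x : ι → K}
    (hx : hammingCheckMatrix P *ᵥ x = 0) (hx0 : x ≠ 0) : 3 ≤ hammingNorm x := by
  classical
  by_contra! hlt
  obtain ⟨p, hp⟩ := Function.ne_iff.1 hx0
  have : Nonempty ι := ⟨p⟩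
  obtain ⟨p', hp'⟩ : ∃ p', ({q | x q ≠ 0} : Finset ι).erase p ⊆ {p'} := by
    refine Finset.card_le_one_iff_subset_singleton.1 ?_
    rw [Finset.card_erase_of_mem (by simpa using hp)]
    unfold hammingNorm at hlt
    omega
  have hout : ∀ q ∉ ({p, p'} : Finset ι), x q = 0 := fun q hq => by
    by_contra h
    exact hq (Finset.subset_insert_iff.2 hp' (by simpa using h))
  have hsum : ∑ q ∈ {p, p'}, x q • (P q).rep = 0 := by
    rw [Finset.sum_subset (Finset.subset_univ _) fun q _ hq => by simp [hout q hq],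
      ← hammingCheckMatrix_mulVec, hx]
  exact hp (linearIndepOn_finset_iff.1 (by simpa using linearIndepOn_rep_pair P p p') x hsum p
    (by simp))

theorem exists_mulVec_eq_zero_hammingNorm_eq_three [Fintype m] (hm : 2 ≤ Fintype.card m) :
    ∃ x : ι → K, hammingCheckMatrix P *ᵥ x = 0 ∧ x ≠ 0 ∧ hammingNorm x = 3 := by
  classical
  have : Nonempty m := Fintype.card_pos_iff.1 (by omega)
  let p₁ := P.symm (Classical.arbitrary _)
  have hline : K ∙ (P p₁).rep ≠ ⊤ := fun h => by
    have := congrArg (fun S : Submodule K (m → K) => Module.finrank K S) h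
    rw [finrank_span_singleton (P p₁).rep_nonzero, finrank_top,
      Module.finrank_fintype_fun_eq_card] at this
    omega
  obtain ⟨v, -, hv⟩ := SetLike.exists_of_lt (lt_top_iff_ne_top.2 hline)
  have hv0 : v ≠ 0 := by
    rintro rfl
    exact hv (Submodule.zero_mem _)
  let p₂ := P.symm (Projectivization.mk K v hv0)
  have h₁₂ : p₁ ≠ p₂ := fun h => hv <| by
    rw [← Projectivization.mk_eq_iff_mem_span hv0, h, P.apply_symm_apply]
  have hind := LinearIndependent.pair_iff.1 <|
    Projectivization.linearIndependent_pair_iff_ne.2 (P.injective.ne h₁₂)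
  obtain ⟨p₃, c, hc⟩ := exists_smul_rep_eq P (s := (P p₁).rep + (P p₂).rep) fun h =>
    one_ne_zero (hind 1 1 (by simpa using h)).1
  set x : ι → K := Pi.single p₁ 1 + Pi.single p₂ 1 - Pi.single p₃ (c : K)
  have hx : hammingCheckMatrix P *ᵥ x = 0 := by
    simp [x, mulVec_add, mulVec_sub, op_smul_eq_smul, ← Units.smul_def, hc]
  have hx0 : x ≠ 0 := by
    intro h
    have h₁ := congrFun h p₁
    have h₂ := congrFun h p₂
    by_cases h₁₃ : p₁ = p₃
    · simp [x, Ne.symm h₁₂, ← h₁₃] at h₂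
    · simp [x, h₁₂, h₁₃] at h₁
  refine ⟨x, hx, hx0, le_antisymm ?_ (three_le_hammingNorm_of_mulVec_eq_zero P hx hx0)⟩
  unfold hammingNorm
  refine (Finset.card_le_card (t := {p₁, p₂, p₃}) fun q hq => ?_).trans Finset.card_le_three
  simp only [Finset.mem_insert, Finset.mem_singleton]
  by_contra! hq'
  simp [x, hq'.1, hq'.2.1, hq'.2.2] at hq

theorem exists_mulVec_eq_zero_hammingDist_le_one [Fintype m] (x : ι → K) :
    ∃ y, hammingCheckMatrix P *ᵥ y = 0 ∧ hammingDist x y ≤ 1 := by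
  classical
  rcases eq_or_ne (hammingCheckMatrix P *ᵥ x) 0 with h | h
  · exact ⟨x, h, by simp⟩
  obtain ⟨p, c, hc⟩ := exists_smul_rep_eq P h
  refine ⟨x - Pi.single p (c : K), ?_, Finset.card_le_one.2 fun i hi j hj => ?_⟩
  · simp [mulVec_sub, op_smul_eq_smul, ← Units.smul_def, hc]
  · simp only [Finset.mem_filter, Finset.mem_univ, true_and, Pi.sub_apply, Pi.single_apply] at hi hj
    split_ifs at hi hj <;> simp_all

end HammingWeights

theorem natCard_projectivization_fin_fun {K : Type*} [Field K] [Fintype K] (k : ℕ) :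
    Nat.card (ℙ K (Fin k → K)) = (Fintype.card K ^ k - 1) / (Fintype.card K - 1) := by
  simp [Projectivization.card'', Nat.card_eq_fintype_card]

theorem isHammingCode_ker_hammingCheckMatrix {K : Type*} [Field K] [Fintype K] [DecidableEq K]
    {k nm : ℕ} (P : Fin nm ≃ ℙ K (Fin k → K)) (hk : 2 ≤ k) :
    IsHammingCode k (LinearMap.ker (hammingCheckMatrix P).mulVecLin) := by
  have hnm : nm = (Fintype.card K ^ k - 1) / (Fintype.card K - 1) := by
    rw [← natCard_projectivization_fin_fun, ← Nat.card_congr P, Nat.card_fin]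
  have : Nonempty (Fin k) := ⟨⟨0, by omega⟩⟩
  let p := P.symm (Classical.arbitrary _)
  refine ⟨hk, hnm, by simpa using finrank_ker_hammingCheckMatrix_mulVecLin P, ?_, ?_⟩
  · obtain ⟨x, hx, hx0, hx3⟩ := exists_mulVec_eq_zero_hammingNorm_eq_three P (by simpa)
    exact minDist_eq_of_le_hammingNorm _
      (fun _ hy hy0 => three_le_hammingNorm_of_mulVec_eq_zero P hy hy0) ⟨x, hx, hx0, hx3⟩
  · refine coveringRadius_eq_one (fun x => exists_mulVec_eq_zero_hammingDist_le_one P x)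
      ((Set.ne_univ_iff_exists_notMem _).2 ⟨Pi.single p 1, ?_⟩)
    simpa [mulVec_single] using (P p).rep_nonzero

/-- every equidistant linear code of dimension `k ≥ 1` and length `n` satisfies
`n = ℓ·(qᵏ-1)/(q-1) + u` and is monomially equivalent to the code generated by the matrix
`[H_k | ⋯ | H_k | 0]` (ℓ copies of a parity check matrix of the Hamming code, `u` zero columns). -/
theorem equidistant_classification
    {F : Type*} [Field F] [Fintype F] [DecidableEq F] {n k : ℕ} (hk : 1 ≤ k)
    (E : Submodule F (Fin n → F))
    (hdim : Module.finrank F E = k)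
    (heq : IsEquidistant (E : Set (Fin n → F))) :
    ∃ ℓ : ℕ, 1 ≤ ℓ ∧ ∃ u : ℕ,
      n = ℓ * ((Fintype.card F ^ k - 1) / (Fintype.card F - 1)) + u ∧
      ∃ H : Submodule F (Fin ((Fintype.card F ^ k - 1) / (Fintype.card F - 1)) → F),
        ((k = 1 ∧ H = ⊥) ∨ IsHammingCode k H) ∧
        ∃ M : Matrix (Fin k) (Fin ((Fintype.card F ^ k - 1) / (Fintype.card F - 1))) F,
          (∀ x, x ∈ H ↔ M.mulVec x = 0) ∧
          MonomiallyEquivalent (E : Set (Fin n → F))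
            (Set.range fun v : Fin k → F =>
              Sum.elim
                (fun p : Fin ℓ × Fin ((Fintype.card F ^ k - 1) / (Fintype.card F - 1)) =>
                  Matrix.vecMul v M p.2)
                (fun _ : Fin u => (0 : F))) := by
  obtain ⟨d, hd⟩ := heq
  obtain ⟨G, hG, hE⟩ := E.exists_linearIndependent_row_range_vecMul hdim
  have hwt : ∀ v ≠ 0, hammingNorm (v ᵥ* G) = d := fun v hv => by
    rw [← hammingDist_zero_right]
    exact hd _ (hE ▸ ⟨v, rfl⟩) 0 E.zero_mem fun h =>
      hv (vecMul_injective_iff.2 hG (h.trans (zero_vecMul G).symm))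
  have hG0 : G ≠ 0 := fun h => hG.ne_zero ⟨0, hk⟩ (by rw [h]; rfl)
  let P := (Finite.equivFinOfCardEq (natCard_projectivization_fin_fun (K := F) k)).symm
  obtain ⟨ℓ, hℓ, u, e, s, hcol⟩ := exists_equiv_sum_col_eq_smul G hG0 hwt P
  refine ⟨ℓ, hℓ, u, by simpa using Fintype.card_congr e,
    LinearMap.ker (hammingCheckMatrix P).mulVecLin, ?_, hammingCheckMatrix P,
    fun _ => LinearMap.mem_ker, ?_⟩
  · rcases hk.eq_or_lt with rfl | hk
    · refine Or.inl ⟨rfl, Submodule.finrank_eq_zero.1 ?_⟩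
      simp [finrank_ker_hammingCheckMatrix_mulVecLin,
        Nat.div_self (Nat.sub_pos_of_lt (Fintype.one_lt_card (α := F)))]
    · exact Or.inr (isHammingCode_ker_hammingCheckMatrix P hk)
  · rw [hE]
    convert monomiallyEquivalent_range_vecMul G
      (Matrix.of (Sum.elim (fun x : Fin ℓ × _ => (P x.2).rep) 0))ᵀ e s hcol using 3 with v
    funext κ
    cases κ
    · rfl
    · simp [vecMul]
end

section
/- Let C be a nontrivial linear [n,k,d]_q code whose nonzero codewords take exactly two distinct Hamming weights w_1 and w_2 = d, with w_1 = n. Then C is monomially equivalent to a code spanned by the all-one vector of 𝔽_q^n together with the set {(v|0) : v ∈ E}, where E ⊆ 𝔽_q^{n−1} is an equidistant linear [n−1, k−1, d]_q code with the property that for every nonzero codeword v ∈ E and every symbol α ∈ 𝔽_q, the number of coordinates of the vector (v|0) ∈ 𝔽_q^n equal to α is either exactly n − d or zero. -/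
open Finset

variable {F : Type*} [Field F] [Fintype F] [DecidableEq F]

/-!
Dividing every coordinate by the corresponding entry of a codeword of full weight `n` is a
monomial transformation, and it turns that codeword into the all-one vector `𝟙`. A code `D`
containing `𝟙` splits as `⟨𝟙⟩ ⊕ {(v|0) : v ∈ E}`, where `E` is `D` shortened at the last
coordinate. A nonzero `(v|0)` vanishes somewhere, so its weight is not `n` and must be `d`:
`E` is equidistant. Finally `(v|0) - α 𝟙 ∈ D` has weight `n - #{i | (v|0) i = α}`; this weight
is not `0` when `v ≠ 0`, so it is `n` or `d`, and the count is `0` or `n - d`.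
-/

open Module

section Hamming

variable {F : Type*} [Field F] [DecidableEq F] {ι : Type*} [Fintype ι]

theorem hammingNorm_eq_card_iff {x : ι → F} :
    hammingNorm x = Fintype.card ι ↔ ∀ i, x i ≠ 0 := by
  rw [hammingNorm, ← Finset.card_univ, Finset.card_filter_eq_iff]
  simp

theorem hammingNorm_sub_smul_one_add_card_filter_eq (x : ι → F) (α : F) :
    hammingNorm (x - α • fun _ => 1) + #{i | x i = α} = Fintype.card ι := by
  have hnorm : hammingNorm (x - α • fun _ => 1) = #{i | ¬ x i = α} := by
    simp [hammingNorm, sub_eq_zero]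
  rw [hnorm, add_comm, card_filter_add_card_filter_not, card_univ]

variable {E : Submodule F (ι → F)} {w : ℕ}

theorem hammingDist_eq_of_hammingNorm_eq (hE : ∀ v ∈ E, v ≠ 0 → hammingNorm v = w)
    {x y : ι → F} (hx : x ∈ E) (hy : y ∈ E) (hxy : x ≠ y) : hammingDist x y = w := by
  rw [hammingDist_eq_hammingNorm, neg_add_eq_sub]
  exact hE _ (E.sub_mem hy hx) (sub_ne_zero.mpr hxy.symm)

theorem isEquidistant_of_hammingNorm_eq (hE : ∀ v ∈ E, v ≠ 0 → hammingNorm v = w) :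
    IsEquidistant (E : Set (ι → F)) :=
  ⟨w, fun _ hx _ hy => hammingDist_eq_of_hammingNorm_eq hE hx hy⟩

theorem minDist_eq_of_hammingNorm_eq (hbot : E ≠ ⊥)
    (hE : ∀ v ∈ E, v ≠ 0 → hammingNorm v = w) : minDist (E : Set (ι → F)) = w := by
  obtain ⟨v, hv, hv0⟩ := (Submodule.ne_bot_iff E).mp hbot
  have hdists : {d : ℕ | ∃ x ∈ (E : Set (ι → F)), ∃ y ∈ (E : Set (ι → F)),
      x ≠ y ∧ hammingDist x y = d} = {w} := by
    refine Set.eq_singleton_iff_unique_mem.mpr ⟨⟨v, hv, 0, E.zero_mem, hv0, ?_⟩, ?_⟩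
    · rw [hammingDist_zero_right, hE v hv hv0]
    · rintro _ ⟨x, hx, y, hy, hxy, rfl⟩
      exact hammingDist_eq_of_hammingNorm_eq hE hx hy hxy
  rw [minDist, hdists, csInf_singleton]

end Hamming

section Monomial

variable {F : Type*} [Field F] {ι κ : Type*}

def monomialEquiv (e : ι ≃ κ) (s : ι → Fˣ) : (ι → F) ≃ₗ[F] (κ → F) where
  toFun x j := s (e.symm j) * x (e.symm j)
  invFun y i := ((s i)⁻¹ : Fˣ) * y (e i)
  map_add' x y := by funext j; simp [mul_add]
  map_smul' a x := by funext j; simp [mul_left_comm]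
  left_inv x := by funext i; simp
  right_inv y := by funext j; simp

@[simp]
theorem monomialEquiv_apply (e : ι ≃ κ) (s : ι → Fˣ) (x : ι → F) (j : κ) :
    monomialEquiv e s x j = s (e.symm j) * x (e.symm j) :=
  rfl

theorem hammingNorm_monomialEquiv [DecidableEq F] [Fintype ι] [Fintype κ] (e : ι ≃ κ)
    (s : ι → Fˣ) (x : ι → F) : hammingNorm (monomialEquiv e s x) = hammingNorm x := by
  simp only [hammingNorm, monomialEquiv_apply, ne_eq, mul_eq_zero, Units.ne_zero, false_or]
  exact Finset.card_equiv e.symm (by simp)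

theorem monomiallyEquivalent_map_monomialEquiv (e : ι ≃ κ)
    (s : ι → Fˣ) (C : Submodule F (ι → F)) :
    MonomiallyEquivalent (C : Set (ι → F))
      (C.map (monomialEquiv e s : (ι → F) →ₗ[F] (κ → F)) : Set (κ → F)) :=
  ⟨e, s, (Submodule.map_coe (monomialEquiv e s : (ι → F) →ₗ[F] (κ → F)) C).symm⟩

end Monomial

section Shortening

variable {F : Type*} [Field F] {m : ℕ}

variable (F m) in
def appendZero : (Fin m → F) →ₗ[F] (Fin (m + 1) → F) where
  toFun v := Fin.snoc v 0
  map_add' v w := by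
    funext i
    refine Fin.lastCases ?_ (fun i => ?_) i <;> simp
  map_smul' a v := by
    funext i
    refine Fin.lastCases ?_ (fun i => ?_) i <;> simp

@[simp]
theorem appendZero_apply (v : Fin m → F) : appendZero F m v = Fin.snoc v 0 :=
  rfl

theorem appendZero_injective : Function.Injective (appendZero F m) := fun v w h => by
  funext i
  simpa using congrFun h i.castSucc

theorem hammingNorm_appendZero [DecidableEq F] (v : Fin m → F) :
    hammingNorm (appendZero F m v) = hammingNorm v := by
  rw [hammingNorm, hammingNorm, card_filter, card_filter, Fin.sum_univ_castSucc]
  simp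

def shortenedAtLast (D : Submodule F (Fin (m + 1) → F)) : Submodule F (Fin m → F) :=
  D.comap (appendZero F m)

variable {D : Submodule F (Fin (m + 1) → F)}

theorem span_one_sup_map_shortenedAtLast (h1 : (fun _ => 1) ∈ D) :
    F ∙ (fun _ => 1) ⊔ (shortenedAtLast D).map (appendZero F m) = D := by
  refine le_antisymm (sup_le ((Submodule.span_singleton_le_iff_mem _ _).mpr h1)
    (Submodule.map_comap_le _ _)) fun x hx => ?_
  set a := x (Fin.last m)
  have hv : appendZero F m (fun i => x i.castSucc - a) = x - a • fun _ => 1 := by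
    funext i
    refine Fin.lastCases ?_ (fun i => ?_) i <;> simp [a]
  have hvD : (fun i => x i.castSucc - a) ∈ shortenedAtLast D := by
    rw [shortenedAtLast, Submodule.mem_comap, hv]
    exact D.sub_mem hx (D.smul_mem a h1)
  have hx_eq : x = a • (fun _ => 1) + appendZero F m (fun i => x i.castSucc - a) := by
    rw [hv, add_sub_cancel]
  rw [hx_eq]
  exact Submodule.add_mem_sup (Submodule.smul_mem _ a (Submodule.mem_span_singleton_self _))
    (Submodule.mem_map_of_mem hvD)

theorem span_one_union_image_shortenedAtLast (h1 : (fun _ => 1) ∈ D) :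
    Submodule.span F ({fun _ => (1 : F)} ∪
      (fun v : Fin m → F => Fin.snoc v (0 : F)) '' (shortenedAtLast D : Set (Fin m → F))) = D := by
  rw [Submodule.span_union]
  convert span_one_sup_map_shortenedAtLast h1
  exact (Submodule.span_image (appendZero F m)).trans (by rw [Submodule.span_eq])

theorem disjoint_span_one_map_appendZero (E : Submodule F (Fin m → F)) :
    Disjoint (F ∙ (fun _ => (1 : F))) (E.map (appendZero F m)) := by
  rw [Submodule.disjoint_def]
  rintro x hx ⟨v, -, rfl⟩
  obtain ⟨a, ha⟩ := Submodule.mem_span_singleton.mp hx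
  have ha0 : a = 0 := by simpa using congrFun ha (Fin.last m)
  rw [← ha, ha0, zero_smul]

theorem finrank_shortenedAtLast_add_one (h1 : (fun _ => 1) ∈ D) :
    finrank F (shortenedAtLast D) + 1 = finrank F D := by
  have hsum := Submodule.finrank_sup_add_finrank_inf_eq (F ∙ (fun _ => (1 : F)))
    ((shortenedAtLast D).map (appendZero F m))
  rw [span_one_sup_map_shortenedAtLast h1, (disjoint_span_one_map_appendZero _).eq_bot,
    finrank_bot, add_zero, finrank_span_singleton (fun h => one_ne_zero (congrFun h 0)),
    ← LinearEquiv.finrank_eq (Submodule.equivMapOfInjective _ appendZero_injective _)] at hsum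
  omega

variable [DecidableEq F] {w : ℕ}
  (hw : ∀ x ∈ D, x ≠ 0 → hammingNorm x = m + 1 ∨ hammingNorm x = w)
include hw

theorem hammingNorm_of_mem_shortenedAtLast {v : Fin m → F} (hv : v ∈ shortenedAtLast D)
    (hv0 : v ≠ 0) : hammingNorm v = w := by
  have hx0 : appendZero F m v ≠ 0 := (map_ne_zero_iff _ appendZero_injective).mpr hv0
  rw [← hammingNorm_appendZero]
  refine (hw _ hv hx0).resolve_left fun hfull => ?_
  exact hammingNorm_eq_card_iff.mp (by rwa [Fintype.card_fin]) (Fin.last m) (by simp)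

theorem card_filter_appendZero_eq (h1 : (fun _ => 1) ∈ D) {v : Fin m → F}
    (hv : v ∈ shortenedAtLast D) (hv0 : v ≠ 0) (α : F) :
    #{i | appendZero F m v i = α} = m + 1 - w ∨ #{i | appendZero F m v i = α} = 0 := by
  set x := appendZero F m v
  have hcount := hammingNorm_sub_smul_one_add_card_filter_eq x α
  rw [Fintype.card_fin] at hcount
  have hxα : x - α • (fun _ => 1) ≠ 0 := fun h => by
    have hα : α = 0 := by simpa [x] using (congrFun h (Fin.last m)).symm
    rw [hα, zero_smul, sub_zero] at h
    exact (map_ne_zero_iff _ appendZero_injective).mpr hv0 h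
  have hmem : x - α • (fun _ => 1) ∈ D := D.sub_mem hv (D.smul_mem α h1)
  rcases hw _ hmem hxα with h | h <;> omega

end Shortening

theorem two_weight_antipodal_structure_general
    {F : Type*} [Field F] [DecidableEq F] {n k d : ℕ}
    (C : Submodule F (Fin n → F))
    (hk : Module.finrank F C = k)
    (hk2 : 2 ≤ k)
    (hw : ∀ v ∈ C, v ≠ (0 : Fin n → F) → hammingNorm v = n ∨ hammingNorm v = d)
    (hw1 : ∃ v ∈ C, hammingNorm v = n) :
    ∃ E : Submodule F (Fin (n - 1) → F),
      Module.finrank F E = k - 1 ∧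
      IsEquidistant (E : Set (Fin (n - 1) → F)) ∧
      minDist (E : Set (Fin (n - 1) → F)) = d ∧
      (∀ v ∈ E, v ≠ (0 : Fin (n - 1) → F) → ∀ α : F,
        (Finset.univ.filter fun i : Fin (n - 1 + 1) => (Fin.snoc v (0 : F) : Fin (n - 1 + 1) → F) i = α).card = n - d ∨
        (Finset.univ.filter fun i : Fin (n - 1 + 1) => (Fin.snoc v (0 : F) : Fin (n - 1 + 1) → F) i = α).card = 0) ∧
      MonomiallyEquivalent (C : Set (Fin n → F))
        ((Submodule.span F
            ({fun _ => (1 : F)} ∪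
              (fun v : Fin (n - 1) → F => Fin.snoc v (0 : F)) '' (E : Set (Fin (n - 1) → F))) :
          Submodule F (Fin (n - 1 + 1) → F)) : Set (Fin (n - 1 + 1) → F)) := by
  have hn : n = n - 1 + 1 := by
    have := hk ▸ C.finrank_le
    rw [finrank_fin_fun] at this
    omega
  obtain ⟨u, huC, hun⟩ := hw1
  have hu : ∀ i, u i ≠ 0 := hammingNorm_eq_card_iff.mp (by rwa [Fintype.card_fin])
  set ψ := monomialEquiv (finCongr hn) fun i => (Units.mk0 (u i) (hu i))⁻¹
  set D := C.map (ψ : (Fin n → F) →ₗ[F] (Fin (n - 1 + 1) → F))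
  have h1 : (fun _ => 1) ∈ D := ⟨u, huC, by funext j; simp [ψ, hu]⟩
  have hwD : ∀ x ∈ D, x ≠ 0 → hammingNorm x = n - 1 + 1 ∨ hammingNorm x = d := by
    rintro _ ⟨y, hy, rfl⟩ hy0
    have := hw y hy (by simpa using hy0)
    rw [LinearEquiv.coe_coe, hammingNorm_monomialEquiv]
    omega
  have hrank : finrank F (shortenedAtLast D) = k - 1 := by
    have := finrank_shortenedAtLast_add_one h1
    rw [LinearEquiv.finrank_map_eq, hk] at this
    omega
  have hbot : shortenedAtLast D ≠ ⊥ := fun h => by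
    rw [h, finrank_bot] at hrank
    omega
  have hE : ∀ v ∈ shortenedAtLast D, v ≠ 0 → hammingNorm v = d := fun _ =>
    hammingNorm_of_mem_shortenedAtLast hwD
  refine ⟨shortenedAtLast D, hrank, isEquidistant_of_hammingNorm_eq hE,
    minDist_eq_of_hammingNorm_eq hbot hE, fun v hv hv0 α => ?_, ?_⟩
  · have hnd : n - 1 + 1 - d = n - d := by omega
    exact hnd ▸ card_filter_appendZero_eq hwD h1 hv hv0 α
  · rw [span_one_union_image_shortenedAtLast h1]
    exact monomiallyEquivalent_map_monomialEquiv _ _ C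

/-- a nontrivial two-weight linear code with weights `w₁ = n` and `w₂ = d` is
monomially equivalent to the span of the all-one vector together with `{(v|0) : v ∈ E}` for an
equidistant `[n-1, k-1, d]` code `E` in which every symbol occurring in `(v|0)` occurs exactly
`n - d` times. -/
theorem two_weight_antipodal_structure
    {F : Type*} [Field F] [Fintype F] [DecidableEq F] {n k d : ℕ}
    (C : Submodule F (Fin n → F))
    (hk : Module.finrank F C = k)
    (hk2 : 2 ≤ k) (hkn : k + 2 ≤ n)
    (hd : minDist (C : Set (Fin n → F)) = d)
    (hdn : d ≠ n)
    (hw : ∀ v ∈ C, v ≠ (0 : Fin n → F) → hammingNorm v = n ∨ hammingNorm v = d)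
    (hw1 : ∃ v ∈ C, hammingNorm v = n)
    (hw2 : ∃ v ∈ C, hammingNorm v = d) :
    ∃ E : Submodule F (Fin (n - 1) → F),
      Module.finrank F E = k - 1 ∧
      IsEquidistant (E : Set (Fin (n - 1) → F)) ∧
      minDist (E : Set (Fin (n - 1) → F)) = d ∧
      (∀ v ∈ E, v ≠ (0 : Fin (n - 1) → F) → ∀ α : F,
        (Finset.univ.filter fun i : Fin (n - 1 + 1) => (Fin.snoc v (0 : F) : Fin (n - 1 + 1) → F) i = α).card = n - d ∨
        (Finset.univ.filter fun i : Fin (n - 1 + 1) => (Fin.snoc v (0 : F) : Fin (n - 1 + 1) → F) i = α).card = 0) ∧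
      MonomiallyEquivalent (C : Set (Fin n → F))
        ((Submodule.span F
            ({fun _ => (1 : F)} ∪
              (fun v : Fin (n - 1) → F => Fin.snoc v (0 : F)) '' (E : Set (Fin (n - 1) → F))) :
          Submodule F (Fin (n - 1 + 1) → F)) : Set (Fin (n - 1 + 1) → F)) :=
  two_weight_antipodal_structure_general C hk hk2 hw hw1
end
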